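/- arXiv:0801.3472 — 7 statements merged into one kernel-verified Lean document; each statement's English description precedes it below -/
import Mathlib

section
/- Let R be a prime centrally closed ring with center C a field, and let S be a simple C-algebra. Then every nonzero two-sided ideal of R ⊗_C S intersects R ⊗ 1 nontrivially; consequently R ⊗_C S is a prime ring. -/
open TensorProduct

/-!
Pick `u ≠ 0` in a nonzero ideal `J` of `R ⊗[C] S` with the fewest nonzero coordinates `u i ∈ R`
with respect to a `C`-basis of `S`. Among the elements of `J` supported inside the support of `u`,
minimality forces the coordinate at a fixed `i₀` to determine the coordinate at `i`, and the
resulting map is an `(R,R)`-bimodule map from a nonzero ideal of `R` into `R`. Central closure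
makes it multiplication by some `c i ∈ C`, so `u = u i₀ ⊗ s`, and simplicity of `S` turns
`u i₀ ⊗ s ∈ J` into `u i₀ ⊗ 1 ∈ J`. Primeness then passes from `R` along the injection `r ↦ r ⊗ 1`.
-/

/-- `f : R → R` restricts to an `(R,R)`-bimodule map on the two-sided ideal `I`. -/
def IsBimodOn {R : Type*} [Ring R] (I : TwoSidedIdeal R) (f : R → R) : Prop :=
  (∀ x ∈ I, ∀ y ∈ I, f (x + y) = f x + f y) ∧
  (∀ r : R, ∀ x ∈ I, f (r * x) = r * f x) ∧
  (∀ r : R, ∀ x ∈ I, f (x * r) = f x * r)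

/-- A ring is prime if the product of any two nonzero two-sided ideals is nonzero
(in particular the ring is nonzero). -/
def IsPrimeRing (T : Type*) [Ring T] : Prop :=
  Nontrivial T ∧
    ∀ A B : TwoSidedIdeal T, A ≠ ⊥ → B ≠ ⊥ → ∃ a ∈ A, ∃ b ∈ B, a * b ≠ 0

theorem TwoSidedIdeal.exists_mem_ne_zero {T : Type*} [Ring T] {J : TwoSidedIdeal T}
    (hJ : J ≠ ⊥) : ∃ x ∈ J, x ≠ 0 := by
  by_contra! h
  exact hJ (TwoSidedIdeal.ext fun x => ⟨fun hx => (TwoSidedIdeal.mem_bot T).2 (h x hx),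
    fun hx => (TwoSidedIdeal.mem_bot T).1 hx ▸ J.zero_mem⟩)

theorem exists_isBimodOn_of_graph {R : Type*} [Ring R] (G : Submodule R (R × R))
    (mul_right_mem : ∀ r : R, ∀ p ∈ G, p * (r, r) ∈ G)
    (functional : ∀ y : R, ((0 : R), y) ∈ G → y = 0) :
    ∃ I : TwoSidedIdeal R, (∀ x, x ∈ I ↔ ∃ y, (x, y) ∈ G) ∧
      ∃ f : R → R, IsBimodOn I f ∧ ∀ p ∈ G, f p.1 = p.2 := by
  classical
  have snd_eq : ∀ p ∈ G, ∀ q ∈ G, p.1 = q.1 → p.2 = q.2 := fun p hp q hq h =>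
    sub_eq_zero.1 <| functional _ <| by
      convert G.sub_mem hp hq using 1
      ext <;> simp [h]
  let I : TwoSidedIdeal R := .mk' {x | ∃ y, (x, y) ∈ G} ⟨0, G.zero_mem⟩
    (fun ⟨y, hy⟩ ⟨y', hy'⟩ => ⟨y + y', G.add_mem hy hy'⟩) (fun ⟨y, hy⟩ => ⟨-y, G.neg_mem hy⟩)
    (fun {r _} ⟨y, hy⟩ => ⟨r * y, G.smul_mem r hy⟩)
    (fun {_ r} ⟨y, hy⟩ => ⟨y * r, mul_right_mem r _ hy⟩)
  have mem_I : ∀ x, x ∈ I ↔ ∃ y, (x, y) ∈ G := fun x => TwoSidedIdeal.mem_mk' _ _ _ _ _ _ x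
  let f : R → R := fun x => if h : ∃ y, (x, y) ∈ G then h.choose else 0
  have hf : ∀ p ∈ G, f p.1 = p.2 := fun p hp => by
    have h : ∃ y, (p.1, y) ∈ G := ⟨p.2, hp⟩
    simpa only [f, dif_pos h] using snd_eq _ h.choose_spec p hp rfl
  refine ⟨I, mem_I, f, ⟨?_, ?_, ?_⟩, hf⟩
  · rintro x hx x' hx'
    obtain ⟨y, hy⟩ := (mem_I x).1 hx
    obtain ⟨y', hy'⟩ := (mem_I x').1 hx'
    rw [hf _ hy, hf _ hy']
    exact hf (_, _) (G.add_mem hy hy')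
  · rintro r x hx
    obtain ⟨y, hy⟩ := (mem_I x).1 hx
    rw [hf _ hy]
    exact hf (_, _) (G.smul_mem r hy)
  · rintro r x hx
    obtain ⟨y, hy⟩ := (mem_I x).1 hx
    rw [hf _ hy]
    exact hf (_, _) (mul_right_mem r _ hy)

def IsCentrallyClosed (C R : Type*) [CommSemiring C] [Ring R] [Algebra C R] : Prop :=
  ∀ I : TwoSidedIdeal R, I ≠ ⊥ → ∀ f : R → R, IsBimodOn I f →
    ∃ c : C, ∀ x ∈ I, f x = algebraMap C R c * x

theorem IsCentrallyClosed.exists_snd_eq_algebraMap_mul_fst {C R : Type*} [CommSemiring C]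
    [Ring R] [Algebra C R] (hR : IsCentrallyClosed C R) (G : Submodule R (R × R))
    (mul_right_mem : ∀ r : R, ∀ p ∈ G, p * (r, r) ∈ G)
    (functional : ∀ y : R, ((0 : R), y) ∈ G → y = 0) {p₀ : R × R} (hp₀ : p₀ ∈ G)
    (hp₀_ne : p₀.1 ≠ 0) :
    ∃ c : C, ∀ p ∈ G, p.2 = algebraMap C R c * p.1 := by
  obtain ⟨I, mem_I, f, hf, hfG⟩ := exists_isBimodOn_of_graph G mul_right_mem functional
  have hI : I ≠ ⊥ := fun h => hp₀_ne <| (TwoSidedIdeal.mem_bot R).1 <| h ▸ (mem_I _).2 ⟨_, hp₀⟩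
  obtain ⟨c, hc⟩ := hR I hI f hf
  exact ⟨c, fun p hp => (hfG p hp).symm.trans (hc _ ((mem_I _).2 ⟨_, hp⟩))⟩

section Coordinates

variable {C R S ι : Type*} [CommRing C] [Ring R] [Algebra C R] [Ring S] [Algebra C S]
  (b : Module.Basis ι C S)

local notation "coord" => Module.Basis.repr (Algebra.TensorProduct.basis R b)

theorem basis_repr_tmul_one_mul_mul_tmul_one (x y : R) (v : R ⊗[C] S) (j : ι) :
    coord ((x ⊗ₜ 1) * v * (y ⊗ₜ 1)) j = x * coord v j * y := by
  induction v with
  | zero => simp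
  | tmul r s => simp [mul_assoc, Algebra.commutes]
  | add v w hv hw => simp [mul_add, add_mul, hv, hw]

theorem support_basis_repr_tmul_one_mul_mul_tmul_one_subset (x y : R) (v : R ⊗[C] S) :
    (coord ((x ⊗ₜ 1) * v * (y ⊗ₜ 1))).support ⊆ (coord v).support := by
  intro j
  simp only [Finsupp.mem_support_iff, basis_repr_tmul_one_mul_mul_tmul_one]
  exact mt fun h => by rw [h, mul_zero, zero_mul]

def coordGraph (J : TwoSidedIdeal (R ⊗[C] S)) (t : Finset ι) (i₀ i : ι) :
    Submodule R (R × R) where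
  carrier := {p | ∃ v ∈ J, (coord v).support ⊆ t ∧ (coord v i₀, coord v i) = p}
  zero_mem' := ⟨0, J.zero_mem, by simp, by simp⟩
  add_mem' := by
    classical
    rintro _ _ ⟨v, hv, hvt, rfl⟩ ⟨w, hw, hwt, rfl⟩
    refine ⟨v + w, J.add_mem hv hw, ?_, by rw [map_add]; rfl⟩
    rw [map_add]
    exact Finsupp.support_add.trans (Finset.union_subset hvt hwt)
  smul_mem' := by
    rintro r _ ⟨v, hv, hvt, rfl⟩
    refine ⟨(r ⊗ₜ 1) * v * (1 ⊗ₜ 1), J.mul_mem_right _ _ (J.mul_mem_left _ _ hv),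
      (support_basis_repr_tmul_one_mul_mul_tmul_one_subset b r 1 v).trans hvt, ?_⟩
    simp only [basis_repr_tmul_one_mul_mul_tmul_one, mul_one]
    rfl

theorem coordGraph_mul_right_mem {J : TwoSidedIdeal (R ⊗[C] S)} {t : Finset ι} {i₀ i : ι} (r : R)
    {p : R × R} (hp : p ∈ coordGraph b J t i₀ i) : p * (r, r) ∈ coordGraph b J t i₀ i := by
  obtain ⟨v, hv, hvt, rfl⟩ := hp
  refine ⟨(1 ⊗ₜ 1) * v * (r ⊗ₜ 1), J.mul_mem_right _ _ (J.mul_mem_left _ _ hv),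
    (support_basis_repr_tmul_one_mul_mul_tmul_one_subset b 1 r v).trans hvt, ?_⟩
  simp only [basis_repr_tmul_one_mul_mul_tmul_one, one_mul]
  rfl

theorem coordGraph_functional {J : TwoSidedIdeal (R ⊗[C] S)} {u : R ⊗[C] S}
    (hmin : ∀ v ∈ J, (coord v).support.card < (coord u).support.card → v = 0) {i₀ : ι}
    (hi₀ : i₀ ∈ (coord u).support) (i : ι) (y : R)
    (hy : (0, y) ∈ coordGraph b J (coord u).support i₀ i) : y = 0 := by
  classical
  obtain ⟨v, hv, hvu, hvy⟩ := hy
  obtain ⟨hv₀, rfl⟩ := Prod.mk.inj hvy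
  have hsupp : (coord v).support ⊆ (coord u).support.erase i₀ := fun j hj =>
    Finset.mem_erase.2 ⟨fun h => Finsupp.mem_support_iff.1 hj (h ▸ hv₀ :), hvu hj⟩
  rw [hmin v hv ((Finset.card_le_card hsupp).trans_lt (Finset.card_erase_lt_of_mem hi₀)),
    map_zero, Finsupp.coe_zero, Pi.zero_apply]

theorem IsCentrallyClosed.exists_eq_tmul_of_minimal (hR : IsCentrallyClosed C R)
    {J : TwoSidedIdeal (R ⊗[C] S)} {u : R ⊗[C] S} (hu : u ∈ J)
    (hmin : ∀ v ∈ J, (coord v).support.card < (coord u).support.card → v = 0) {i₀ : ι}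
    (hi₀ : i₀ ∈ (coord u).support) : ∃ s : S, u = coord u i₀ ⊗ₜ s := by
  have hG (i : ι) : (coord u i₀, coord u i) ∈ coordGraph b J (coord u).support i₀ i :=
    ⟨u, hu, subset_rfl, rfl⟩
  have (i : ι) : ∃ c : C, coord u i = algebraMap C R c * coord u i₀ := by
    obtain ⟨c, hc⟩ := hR.exists_snd_eq_algebraMap_mul_fst _
      (fun r _ => coordGraph_mul_right_mem b r) (coordGraph_functional b hmin hi₀ i) (hG i)
      (Finsupp.mem_support_iff.1 hi₀)
    exact ⟨c, hc _ (hG i)⟩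
  choose c hc using this
  refine ⟨∑ i ∈ (coord u).support, c i • b i, ?_⟩
  calc u = ∑ i ∈ (coord u).support, coord u i • Algebra.TensorProduct.basis R b i :=
        (Module.Basis.linearCombination_repr _ u).symm
    _ = ∑ i ∈ (coord u).support, coord u i₀ ⊗ₜ (c i • b i) := by
        refine Finset.sum_congr rfl fun i _ => ?_
        rw [Algebra.TensorProduct.basis_repr_symm_apply', hc, ← Algebra.smul_def, smul_tmul]
    _ = _ := (tmul_sum ..).symm

end Coordinates

section Slice

variable {C R S : Type*} [CommRing C] [Ring R] [Algebra C R] [Ring S] [Algebra C S]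

def TwoSidedIdeal.comapTmul (J : TwoSidedIdeal (R ⊗[C] S)) (r : R) : TwoSidedIdeal S :=
  .mk' {s | r ⊗ₜ s ∈ J} (by simp [J.zero_mem])
    (fun hs ht => by simpa [tmul_add] using J.add_mem hs ht)
    (fun hs => by simpa [tmul_neg] using J.neg_mem hs)
    (fun {a _} hs => by simpa using J.mul_mem_left (1 ⊗ₜ a) _ hs)
    (fun {_ a} hs => by simpa using J.mul_mem_right _ (1 ⊗ₜ a) hs)

theorem TwoSidedIdeal.mem_comapTmul {J : TwoSidedIdeal (R ⊗[C] S)} {r : R} {s : S} :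
    s ∈ J.comapTmul r ↔ r ⊗ₜ s ∈ J :=
  TwoSidedIdeal.mem_mk' ..

theorem tmul_one_mem_of_tmul_mem (hS : ∀ I : TwoSidedIdeal S, I = ⊥ ∨ I = ⊤)
    {J : TwoSidedIdeal (R ⊗[C] S)} {r : R} {s : S} (hs : s ≠ 0) (h : r ⊗ₜ s ∈ J) :
    r ⊗ₜ 1 ∈ J := by
  rcases hS (J.comapTmul r) with hbot | htop
  · exact absurd ((TwoSidedIdeal.mem_bot S).1 (hbot ▸ TwoSidedIdeal.mem_comapTmul.2 h)) hs
  · exact TwoSidedIdeal.mem_comapTmul.1 (htop ▸ TwoSidedIdeal.mem_top _)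

end Slice

section Field

variable {C R S : Type*} [Field C] [Ring R] [Algebra C R] [Ring S] [Algebra C S]

theorem IsCentrallyClosed.exists_tmul_mem (hR : IsCentrallyClosed C R)
    {J : TwoSidedIdeal (R ⊗[C] S)} (hJ : J ≠ ⊥) : ∃ r : R, r ≠ 0 ∧ ∃ s : S, s ≠ 0 ∧ r ⊗ₜ s ∈ J := by
  let coord := (Algebra.TensorProduct.basis R (Module.Basis.ofVectorSpace C S)).repr
  obtain ⟨u, ⟨huJ, hu0⟩, hmin⟩ := (measure fun v => (coord v).support.card).wf.has_min
    {v | v ∈ J ∧ v ≠ 0} (TwoSidedIdeal.exists_mem_ne_zero hJ)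
  obtain ⟨i₀, hi₀⟩ : (coord u).support.Nonempty :=
    Finsupp.support_nonempty_iff.2 ((map_ne_zero_iff _ coord.injective).2 hu0)
  obtain ⟨s, hs⟩ := hR.exists_eq_tmul_of_minimal _ huJ
    (fun v hv hlt => by_contra fun hv0 => hmin v ⟨hv, hv0⟩ hlt) hi₀
  refine ⟨coord u i₀, Finsupp.mem_support_iff.1 hi₀, s, ?_, hs ▸ huJ⟩
  rintro rfl
  exact hu0 (by rw [hs, tmul_zero])

theorem IsPrimeRing.tensorProduct [Nontrivial S] (hR : IsPrimeRing R)
    (h : ∀ J : TwoSidedIdeal (R ⊗[C] S), J ≠ ⊥ → ∃ r : R, r ≠ 0 ∧ r ⊗ₜ[C] (1 : S) ∈ J) :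
    IsPrimeRing (R ⊗[C] S) := by
  obtain ⟨_, hprime⟩ := hR
  have inj : Function.Injective (Algebra.TensorProduct.includeLeftRingHom : R →+* R ⊗[C] S) :=
    Algebra.TensorProduct.includeLeft_injective (S := C) (FaithfulSMul.algebraMap_injective C S)
  have comap_ne_bot {J : TwoSidedIdeal (R ⊗[C] S)} (hJ : J ≠ ⊥) :
      J.comap Algebra.TensorProduct.includeLeftRingHom ≠ ⊥ := by
    obtain ⟨r, hr, hrJ⟩ := h J hJ
    intro hbot
    exact hr ((TwoSidedIdeal.mem_bot R).1 (hbot ▸ (TwoSidedIdeal.mem_comap _).2 hrJ))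
  refine ⟨inj.nontrivial, fun A B hA hB => ?_⟩
  obtain ⟨x, hx, y, hy, hxy⟩ := hprime _ _ (comap_ne_bot hA) (comap_ne_bot hB)
  exact ⟨_, (TwoSidedIdeal.mem_comap _).1 hx, _, (TwoSidedIdeal.mem_comap _).1 hy,
    by rwa [← map_mul, map_ne_zero_iff _ inj]⟩

end Field

theorem tensor_with_simple_is_prime_general
    {C R S : Type*} [Field C] [Ring R] [Algebra C R] [Ring S]
    [Nontrivial S] [Algebra C S]
    (hprime : IsPrimeRing R)
    (hclosed : ∀ I : TwoSidedIdeal R, I ≠ ⊥ → ∀ f : R → R, IsBimodOn I f →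
      ∃ c : C, ∀ x ∈ I, f x = algebraMap C R c * x)
    (hsimple : ∀ J : TwoSidedIdeal S, J = ⊥ ∨ J = ⊤) :
    (∀ J : TwoSidedIdeal (R ⊗[C] S), J ≠ ⊥ →
        ∃ r : R, r ≠ 0 ∧ r ⊗ₜ[C] (1 : S) ∈ J) ∧
      IsPrimeRing (R ⊗[C] S) := by
  have meets_tmul_one (J : TwoSidedIdeal (R ⊗[C] S)) (hJ : J ≠ ⊥) :
      ∃ r : R, r ≠ 0 ∧ r ⊗ₜ[C] (1 : S) ∈ J := by
    obtain ⟨r, hr, s, hs, hrs⟩ := IsCentrallyClosed.exists_tmul_mem hclosed hJ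
    exact ⟨r, hr, tmul_one_mem_of_tmul_mem hsimple hs hrs⟩
  exact ⟨meets_tmul_one, hprime.tensorProduct meets_tmul_one⟩

/-- Let `R` be a prime centrally closed ring with center the field `C`, and let `S` be
a simple `C`-algebra. Then every nonzero two-sided ideal of `R ⊗[C] S` meets `R ⊗ 1`
nontrivially; consequently `R ⊗[C] S` is a prime ring. -/
theorem tensor_with_simple_is_prime
    {C R S : Type*} [Field C] [Ring R] [Nontrivial R] [Algebra C R] [Ring S]
    [Nontrivial S] [Algebra C S]
    (hcenter : Set.range (algebraMap C R) = (Subring.center R : Set R))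
    (hprime : IsPrimeRing R)
    (hclosed : ∀ I : TwoSidedIdeal R, I ≠ ⊥ → ∀ f : R → R, IsBimodOn I f →
      ∃ c : C, ∀ x ∈ I, f x = algebraMap C R c * x)
    (hsimple : ∀ J : TwoSidedIdeal S, J = ⊥ ∨ J = ⊤) :
    (∀ J : TwoSidedIdeal (R ⊗[C] S), J ≠ ⊥ →
        ∃ r : R, r ≠ 0 ∧ r ⊗ₜ[C] (1 : S) ∈ J) ∧
      IsPrimeRing (R ⊗[C] S) :=
  tensor_with_simple_is_prime_general hprime hclosed hsimple
end

section
/- Let R be a prime centrally closed ring with center C a field, let S be a C-algebra, and let I be a prime ideal of R ⊗_C S such that I ∩ (R ⊗ 1) = 0. Then I = R ⊗_C (I ∩ S), where I ∩ S denotes the preimage of I under s ↦ 1 ⊗ s. -/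
open TensorProduct

/-- A two-sided ideal `P` of a ring `T` is prime if `P ≠ T` and `AB ⊆ P` implies
`A ⊆ P` or `B ⊆ P` for two-sided ideals `A`, `B`. -/
def IsPrimeTwoSided {T : Type*} [Ring T] (P : TwoSidedIdeal T) : Prop :=
  P ≠ ⊤ ∧ ∀ A B : TwoSidedIdeal T, (∀ a ∈ A, ∀ b ∈ B, a * b ∈ P) → A ≤ P ∨ B ≤ P

section Aux

/-- Concatenated sandwich sums split. -/
lemma concat_sum {R : Type*} [Ring R] (a : R) {m m' : ℕ} (x y : Fin m → R)
    (x' y' : Fin m' → R) :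
    ∑ j : Fin (m + m'), Fin.append x x' j * a * Fin.append y y' j
      = (∑ j, x j * a * y j) + ∑ j, x' j * a * y' j := by
  rw [Fin.sum_univ_add]
  simp

/-- Every element of the two-sided ideal generated by `r₀` is a finite sum
`∑ xⱼ r₀ yⱼ`. -/
lemma mem_span_singleton_rep {R : Type*} [Ring R] (r₀ : R) {t : R}
    (ht : t ∈ TwoSidedIdeal.span {r₀}) :
    ∃ (m : ℕ) (x y : Fin m → R), t = ∑ j, x j * r₀ * y j := by
  classical
  let J : TwoSidedIdeal R := TwoSidedIdeal.mk'
    {t | ∃ (m : ℕ) (x y : Fin m → R), t = ∑ j, x j * r₀ * y j}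
    ⟨0, Fin.elim0, Fin.elim0, by simp⟩
    (by
      rintro a b ⟨m, x, y, rfl⟩ ⟨m', x', y', rfl⟩
      exact ⟨m + m', Fin.append x x', Fin.append y y', (concat_sum r₀ x y x' y').symm⟩)
    (by
      rintro a ⟨m, x, y, rfl⟩
      refine ⟨m, fun j => -x j, y, ?_⟩
      simp [neg_mul])
    (by
      rintro a b ⟨m, x, y, rfl⟩
      refine ⟨m, fun j => a * x j, y, ?_⟩
      rw [Finset.mul_sum]
      simp [mul_assoc])
    (by
      rintro a b ⟨m, x, y, rfl⟩
      refine ⟨m, x, fun j => y j * b, ?_⟩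
      rw [Finset.sum_mul]
      simp [mul_assoc])
  have h1 : t ∈ J := by
    refine TwoSidedIdeal.mem_span_iff.mp ht J ?_
    intro u hu
    rw [Set.mem_singleton_iff] at hu
    subst hu
    show u ∈ J
    refine (TwoSidedIdeal.mem_mk' _ _ _ _ _ _ u).mpr ⟨1, fun _ => 1, fun _ => 1, by simp⟩
  exact (TwoSidedIdeal.mem_mk' _ _ _ _ _ _ t).mp h1

variable {C R S : Type*} [Field C] [Ring R] [Algebra C R] [Ring S] [Algebra C S]

/-- Martindale-style argument: if `r₀ ≠ 0` and the "replacement" of `r₀` by `ri`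
in sandwich sums is well defined, it is given by a central (scalar) multiple. -/
lemma aux_scalar
    (hclosed : ∀ I : TwoSidedIdeal R, I ≠ ⊥ → ∀ f : R → R, IsBimodOn I f →
      ∃ c : C, ∀ x ∈ I, f x = algebraMap C R c * x)
    (r₀ ri : R) (h0 : r₀ ≠ 0)
    (hwd : ∀ (m : ℕ) (x y : Fin m → R),
      ∑ j, x j * r₀ * y j = 0 → ∑ j, x j * ri * y j = 0) :
    ∃ c : C, ri = algebraMap C R c * r₀ := by
  classical
  set J := TwoSidedIdeal.span {r₀} with hJ
  have hr₀J : r₀ ∈ J := TwoSidedIdeal.subset_span rfl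
  have hJbot : J ≠ ⊥ := by
    intro h
    exact h0 ((TwoSidedIdeal.mem_bot R).mp (h ▸ hr₀J))
  -- uniqueness of the replaced value
  have huniq : ∀ (m m' : ℕ) (x y : Fin m → R) (x' y' : Fin m' → R),
      ∑ j, x j * r₀ * y j = ∑ j, x' j * r₀ * y' j →
      ∑ j, x j * ri * y j = ∑ j, x' j * ri * y' j := by
    intro m m' x y x' y' h
    have h2 := hwd (m + m') (Fin.append x x') (Fin.append y (fun j => -y' j)) ?_
    · rw [concat_sum] at h2
      simp only [mul_neg] at h2
      rw [Finset.sum_neg_distrib] at h2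
      have h3 : (∑ j, x j * ri * y j) - ∑ j, x' j * ri * y' j = 0 := by
        rw [sub_eq_add_neg]; exact h2
      exact sub_eq_zero.mp h3
    · rw [concat_sum]
      simp only [mul_neg]
      rw [Finset.sum_neg_distrib, h]
      simp
  have hex : ∀ t : R, ∃ v : R, ∀ (m : ℕ) (x y : Fin m → R),
      t = ∑ j, x j * r₀ * y j → v = ∑ j, x j * ri * y j := by
    intro t
    by_cases ht : t ∈ J
    · obtain ⟨m, x, y, hxy⟩ := mem_span_singleton_rep r₀ ht
      refine ⟨∑ j, x j * ri * y j, fun m' x' y' h' => ?_⟩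
      exact huniq m m' x y x' y' (hxy ▸ h')
    · exact ⟨0, fun m x y h => by
        exact absurd (h ▸ (TwoSidedIdeal.finsetSum_mem J Finset.univ _
          (fun j _ => J.mul_mem_right _ _ (J.mul_mem_left _ _ hr₀J)))) ht⟩
  choose F hF using hex
  have key : ∀ (t : R) (m : ℕ) (x y : Fin m → R),
      t = ∑ j, x j * r₀ * y j → F t = ∑ j, x j * ri * y j := fun t m x y h => hF t m x y h
  have hbimod : IsBimodOn J F := by
    refine ⟨?_, ?_, ?_⟩
    · intro a ha b hb
      obtain ⟨m, x, y, hxy⟩ := mem_span_singleton_rep r₀ ha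
      obtain ⟨m', x', y', hxy'⟩ := mem_span_singleton_rep r₀ hb
      have hab : a + b = ∑ j : Fin (m + m'),
          Fin.append x x' j * r₀ * Fin.append y y' j := by
        rw [concat_sum, ← hxy, ← hxy']
      rw [key _ _ _ _ hab, key _ _ _ _ hxy, key _ _ _ _ hxy', concat_sum]
    · intro r a ha
      obtain ⟨m, x, y, hxy⟩ := mem_span_singleton_rep r₀ ha
      have hra : r * a = ∑ j, (r * x j) * r₀ * y j := by
        rw [hxy, Finset.mul_sum]
        simp [mul_assoc]
      rw [key _ _ _ _ hra, key _ _ _ _ hxy, Finset.mul_sum]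
      simp [mul_assoc]
    · intro r a ha
      obtain ⟨m, x, y, hxy⟩ := mem_span_singleton_rep r₀ ha
      have har : a * r = ∑ j, x j * r₀ * (y j * r) := by
        rw [hxy, Finset.sum_mul]
        simp [mul_assoc]
      rw [key _ _ _ _ har, key _ _ _ _ hxy, Finset.sum_mul]
      simp [mul_assoc]
  obtain ⟨c, hc⟩ := hclosed J hJbot F hbimod
  have h1 : F r₀ = ri := by
    have : r₀ = ∑ _j : Fin 1, (1 : R) * r₀ * 1 := by simp
    rw [key _ _ _ _ this]
    simp
  exact ⟨c, by rw [← h1, hc r₀ hr₀J]⟩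

/-- Key primeness step: if `r ⊗ s ∈ I` with `r ≠ 0`, then `1 ⊗ s ∈ I`. -/
lemma aux_one_tmul (I : TwoSidedIdeal (R ⊗[C] S)) (hI : IsPrimeTwoSided I)
    (hdisj : ∀ r : R, r ⊗ₜ[C] (1 : S) ∈ I → r = 0)
    {r : R} {s : S} (hr : r ≠ 0) (hz : r ⊗ₜ[C] s ∈ I) : (1 : R) ⊗ₜ[C] s ∈ I := by
  classical
  have key : ∀ w : R ⊗[C] S, (r ⊗ₜ[C] (1 : S)) * w * ((1 : R) ⊗ₜ[C] s) ∈ I := by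
    intro w
    induction w using TensorProduct.induction_on with
    | zero => simpa using I.zero_mem
    | tmul x u =>
      have heq : (r ⊗ₜ[C] (1 : S)) * (x ⊗ₜ[C] u) * ((1 : R) ⊗ₜ[C] s)
          = ((1 : R) ⊗ₜ[C] u) * (r ⊗ₜ[C] s) * (x ⊗ₜ[C] (1 : S)) := by
        simp [Algebra.TensorProduct.tmul_mul_tmul]
      rw [heq]
      exact I.mul_mem_right _ _ (I.mul_mem_left _ _ hz)
    | add a b ha hb =>
      have heq : (r ⊗ₜ[C] (1 : S)) * (a + b) * ((1 : R) ⊗ₜ[C] s)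
          = (r ⊗ₜ[C] (1 : S)) * a * ((1 : R) ⊗ₜ[C] s)
            + (r ⊗ₜ[C] (1 : S)) * b * ((1 : R) ⊗ₜ[C] s) := by
        rw [mul_add, add_mul]
      rw [heq]
      exact I.add_mem ha hb
  set A := TwoSidedIdeal.span {r ⊗ₜ[C] (1 : S)} with hA
  set B := TwoSidedIdeal.span {(1 : R) ⊗ₜ[C] s} with hB
  have hA0 : ∀ a ∈ A, ∀ w, a * w * ((1 : R) ⊗ₜ[C] s) ∈ I := by
    intro a ha
    let A0 : TwoSidedIdeal (R ⊗[C] S) := TwoSidedIdeal.mk'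
      {a | ∀ w, a * w * ((1 : R) ⊗ₜ[C] s) ∈ I}
      (fun w => by simpa using I.zero_mem)
      (fun {a b} ha hb w => by
        have : (a + b) * w * ((1 : R) ⊗ₜ[C] s)
            = a * w * ((1 : R) ⊗ₜ[C] s) + b * w * ((1 : R) ⊗ₜ[C] s) := by
          rw [add_mul, add_mul]
        rw [this]; exact I.add_mem (ha w) (hb w))
      (fun {a} ha w => by
        have : (-a) * w * ((1 : R) ⊗ₜ[C] s) = -(a * w * ((1 : R) ⊗ₜ[C] s)) := by
          rw [neg_mul, neg_mul]
        rw [this]; exact I.neg_mem (ha w))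
      (fun {x a} ha w => by
        have : (x * a) * w * ((1 : R) ⊗ₜ[C] s) = x * (a * w * ((1 : R) ⊗ₜ[C] s)) := by
          simp only [mul_assoc]
        rw [this]; exact I.mul_mem_left _ _ (ha w))
      (fun {a y} ha w => by
        have : (a * y) * w * ((1 : R) ⊗ₜ[C] s) = a * (y * w) * ((1 : R) ⊗ₜ[C] s) := by
          simp only [mul_assoc]
        rw [this]; exact ha (y * w))
    have hmem : a ∈ A0 := by
      refine TwoSidedIdeal.mem_span_iff.mp ha A0 ?_
      intro u hu
      rw [Set.mem_singleton_iff] at hu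
      subst hu
      exact (TwoSidedIdeal.mem_mk' _ _ _ _ _ _ _).mpr key
    exact (TwoSidedIdeal.mem_mk' _ _ _ _ _ _ _).mp hmem
  have hAB : ∀ a ∈ A, ∀ b ∈ B, a * b ∈ I := by
    have hB0 : ∀ b ∈ B, ∀ a ∈ A, a * b ∈ I := by
      intro b hb
      let B0 : TwoSidedIdeal (R ⊗[C] S) := TwoSidedIdeal.mk'
        {b | ∀ a ∈ A, a * b ∈ I}
        (fun a _ => by simpa using I.zero_mem)
        (fun {b b'} hb hb' a ha => by
          rw [mul_add]; exact I.add_mem (hb a ha) (hb' a ha))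
        (fun {b} hb a ha => by
          rw [mul_neg]; exact I.neg_mem (hb a ha))
        (fun {x b} hb a ha => by
          rw [← mul_assoc]; exact hb (a * x) (A.mul_mem_right _ _ ha))
        (fun {b y} hb a ha => by
          rw [← mul_assoc]; exact I.mul_mem_right _ _ (hb a ha))
      have hmem : b ∈ B0 := by
        refine TwoSidedIdeal.mem_span_iff.mp hb B0 ?_
        intro u hu
        rw [Set.mem_singleton_iff] at hu
        subst hu
        refine (TwoSidedIdeal.mem_mk' _ _ _ _ _ _ _).mpr ?_
        intro a ha
        have := hA0 a ha 1
        rwa [mul_one] at this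
      exact (TwoSidedIdeal.mem_mk' _ _ _ _ _ _ _).mp hmem
    exact fun a ha b hb => hB0 b hb a ha
  rcases hI.2 A B hAB with h | h
  · exact absurd (hdisj r (h (TwoSidedIdeal.subset_span rfl))) hr
  · exact h (TwoSidedIdeal.subset_span rfl)

/-- The "contraction" `I ∩ S = {s | 1 ⊗ s ∈ I}` as a `C`-submodule of `S`. -/
def auxV (I : TwoSidedIdeal (R ⊗[C] S)) : Submodule C S where
  carrier := {s | (1 : R) ⊗ₜ[C] s ∈ I}
  add_mem' := by
    intro a b ha hb
    show (1 : R) ⊗ₜ[C] (a + b) ∈ I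
    rw [tmul_add]
    exact I.add_mem ha hb
  zero_mem' := by
    show (1 : R) ⊗ₜ[C] (0 : S) ∈ I
    rw [tmul_zero]
    exact I.zero_mem
  smul_mem' := by
    intro c x hx
    show (1 : R) ⊗ₜ[C] (c • x) ∈ I
    rw [tmul_smul, Algebra.smul_def]
    exact I.mul_mem_left _ _ hx

lemma mem_auxV {I : TwoSidedIdeal (R ⊗[C] S)} {s : S} :
    s ∈ auxV I ↔ (1 : R) ⊗ₜ[C] s ∈ I := Iff.rfl

/-- Main Martindale induction: if `∑ rᵢ ⊗ sᵢ ∈ I` with the `sᵢ` linearly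
independent modulo `auxV I`, then all `rᵢ = 0`. -/
lemma aux_main
    (hclosed : ∀ I : TwoSidedIdeal R, I ≠ ⊥ → ∀ f : R → R, IsBimodOn I f →
      ∃ c : C, ∀ x ∈ I, f x = algebraMap C R c * x)
    (I : TwoSidedIdeal (R ⊗[C] S)) (hI : IsPrimeTwoSided I)
    (hdisj : ∀ r : R, r ⊗ₜ[C] (1 : S) ∈ I → r = 0) :
    ∀ (n : ℕ) (r : Fin n → R) (s : Fin n → S),
      (∑ i, r i ⊗ₜ[C] s i) ∈ I →
      LinearIndependent C (fun i => (Submodule.Quotient.mk (s i) : S ⧸ auxV I)) →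
      ∀ i, r i = 0 := by
  intro n
  induction n using Nat.strong_induction_on with
  | _ n IH =>
  cases n with
  | zero => exact fun r s _ _ i => i.elim0
  | succ m =>
  intro r s hz hind
  by_cases h0 : ∃ i, r i = 0
  · obtain ⟨i0, hi0⟩ := h0
    have hsum := Fin.sum_univ_succAbove (fun i => r i ⊗ₜ[C] s i) i0
    have hz' : (∑ j, r (i0.succAbove j) ⊗ₜ[C] s (i0.succAbove j)) ∈ I := by
      rw [hsum, hi0, zero_tmul, zero_add] at hz
      exact hz
    have hind' : LinearIndependent C
        (fun j => (Submodule.Quotient.mk (s (i0.succAbove j)) : S ⧸ auxV I)) :=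
      hind.comp i0.succAbove (Fin.succAbove_right_injective)
    have hall := IH m (Nat.lt_succ_self m) _ _ hz' hind'
    intro i
    rcases eq_or_ne i i0 with rfl | hne
    · exact hi0
    · obtain ⟨j, hj⟩ := Fin.exists_succAbove_eq hne
      rw [← hj]
      exact hall j
  · push_neg at h0
    exfalso
    by_cases hwd : ∀ i (k : ℕ) (x y : Fin k → R),
        ∑ j, x j * r 0 * y j = 0 → ∑ j, x j * r i * y j = 0
    · -- well-defined case: all rᵢ are scalar multiples of r 0
      have hc : ∀ i, ∃ c : C, r i = algebraMap C R c * r 0 :=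
        fun i => aux_scalar hclosed (r 0) (r i) (h0 0) (hwd i)
      choose c hcspec using hc
      have htm : ∀ i, r i ⊗ₜ[C] s i = r 0 ⊗ₜ[C] (c i • s i) := by
        intro i
        rw [hcspec i, ← Algebra.smul_def, smul_tmul]
      have hz2 : (r 0) ⊗ₜ[C] (∑ i, c i • s i) ∈ I := by
        rw [tmul_sum]
        have : ∑ i, r 0 ⊗ₜ[C] (c i • s i) = ∑ i, r i ⊗ₜ[C] s i :=
          Finset.sum_congr rfl fun i _ => (htm i).symm
        rw [this]
        exact hz
      have hs' : (∑ i, c i • s i) ∈ auxV I :=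
        aux_one_tmul I hI hdisj (h0 0) hz2
      have hq : ∑ i, c i • (Submodule.Quotient.mk (s i) : S ⧸ auxV I) = 0 := by
        have : ((auxV I).mkQ) (∑ i, c i • s i) = 0 := by
          rw [Submodule.mkQ_apply, Submodule.Quotient.mk_eq_zero]
          exact hs'
        rw [map_sum] at this
        simpa using this
      have hc0 := Fintype.linearIndependent_iff.mp hind c hq 0
      apply h0 0
      rw [hcspec 0, hc0, map_zero, zero_mul]
    · -- not well-defined: produce a shorter relation
      push_neg at hwd
      obtain ⟨i1, k, x, y, hxy0, hne⟩ := hwd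
      set t : Fin (m + 1) → R := fun i => ∑ j, x j * r i * y j with ht
      have hterm : ∀ j, (x j ⊗ₜ[C] (1 : S)) * (∑ i, r i ⊗ₜ[C] s i) * (y j ⊗ₜ[C] (1 : S))
          = ∑ i, (x j * r i * y j) ⊗ₜ[C] s i := by
        intro j
        rw [Finset.mul_sum, Finset.sum_mul]
        exact Finset.sum_congr rfl fun i _ => by
          simp [Algebra.TensorProduct.tmul_mul_tmul]
      have hw : (∑ i, t i ⊗ₜ[C] s i) ∈ I := by
        have heq : ∑ i, t i ⊗ₜ[C] s i
            = ∑ j, (x j ⊗ₜ[C] (1 : S)) * (∑ i, r i ⊗ₜ[C] s i) * (y j ⊗ₜ[C] (1 : S)) := by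
          rw [Finset.sum_congr rfl fun j (_ : j ∈ Finset.univ) => hterm j]
          rw [Finset.sum_comm]
          exact Finset.sum_congr rfl fun i _ => by rw [ht, sum_tmul]
        rw [heq]
        exact TwoSidedIdeal.finsetSum_mem I _ _ fun j _ =>
          I.mul_mem_right _ _ (I.mul_mem_left _ _ hz)
      have ht0 : t 0 = 0 := hxy0
      have hsum := Fin.sum_univ_succAbove (fun i => t i ⊗ₜ[C] s i) 0
      have hw' : (∑ j, t ((0 : Fin (m + 1)).succAbove j)
          ⊗ₜ[C] s ((0 : Fin (m + 1)).succAbove j)) ∈ I := by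
        rw [hsum, ht0, zero_tmul, zero_add] at hw
        exact hw
      have hind' : LinearIndependent C
          (fun j => (Submodule.Quotient.mk (s ((0 : Fin (m + 1)).succAbove j))
            : S ⧸ auxV I)) :=
        hind.comp _ (Fin.succAbove_right_injective)
      have hall := IH m (Nat.lt_succ_self m) _ _ hw' hind'
      apply hne
      rcases eq_or_ne i1 0 with rfl | hne1
      · exact ht0
      · obtain ⟨j, hj⟩ := Fin.exists_succAbove_eq hne1
        rw [← hj]
        exact hall j

/-- Every element of `I` is in the span of the simple tensors `r ⊗ s` with `1 ⊗ s ∈ I`. -/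
lemma aux_span
    (hclosed : ∀ I : TwoSidedIdeal R, I ≠ ⊥ → ∀ f : R → R, IsBimodOn I f →
      ∃ c : C, ∀ x ∈ I, f x = algebraMap C R c * x)
    (I : TwoSidedIdeal (R ⊗[C] S)) (hI : IsPrimeTwoSided I)
    (hdisj : ∀ r : R, r ⊗ₜ[C] (1 : S) ∈ I → r = 0) :
    ∀ (n : ℕ) (r : Fin n → R) (s : Fin n → S),
      (∑ i, r i ⊗ₜ[C] s i) ∈ I →
      (∑ i, r i ⊗ₜ[C] s i) ∈ TwoSidedIdeal.span
        {z : R ⊗[C] S | ∃ (r : R) (s : S), (1 : R) ⊗ₜ[C] s ∈ I ∧ z = r ⊗ₜ[C] s} := by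
  intro n
  induction n using Nat.strong_induction_on with
  | _ n IH =>
  intro r s hz
  set Sp := TwoSidedIdeal.span
    {z : R ⊗[C] S | ∃ (r : R) (s : S), (1 : R) ⊗ₜ[C] s ∈ I ∧ z = r ⊗ₜ[C] s} with hSp
  by_cases hind : LinearIndependent C (fun i => (Submodule.Quotient.mk (s i) : S ⧸ auxV I))
  · have hall := aux_main hclosed I hI hdisj n r s hz hind
    have hzero : ∑ i, r i ⊗ₜ[C] s i = 0 := by
      refine Finset.sum_eq_zero fun i _ => ?_
      rw [hall i, zero_tmul]
    rw [hzero]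
    exact Sp.zero_mem
  · cases n with
    | zero => exact absurd linearIndependent_empty_type hind
    | succ m =>
    obtain ⟨g, hg0, i0, hgi0⟩ := Fintype.not_linearIndependent_iff.mp hind
    have hv : (∑ i, g i • s i) ∈ auxV I := by
      have hq : ((auxV I).mkQ) (∑ i, g i • s i) = 0 := by
        rw [map_sum]
        simp only [map_smul, Submodule.mkQ_apply]
        exact hg0
      rwa [Submodule.mkQ_apply, Submodule.Quotient.mk_eq_zero] at hq
    set v := ∑ i, g i • s i with hvdef
    set r' : Fin m → R :=
      fun j => r (i0.succAbove j) - ((g i0)⁻¹ * g (i0.succAbove j)) • r i0 with hr'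
    set s' : Fin m → S := fun j => s (i0.succAbove j) with hs'
    have e1 : r i0 ⊗ₜ[C] ((g i0)⁻¹ • v) = ∑ i, ((g i0)⁻¹ * g i) • (r i0 ⊗ₜ[C] s i) := by
      rw [hvdef, Finset.smul_sum, tmul_sum]
      exact Finset.sum_congr rfl fun i _ => by rw [smul_smul, tmul_smul]
    have e2 : ∀ j, r' j ⊗ₜ[C] s' j
        = r (i0.succAbove j) ⊗ₜ[C] s (i0.succAbove j)
          - ((g i0)⁻¹ * g (i0.succAbove j)) • (r i0 ⊗ₜ[C] s (i0.succAbove j)) := by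
      intro j
      rw [hr', hs', sub_tmul, ← smul_tmul']
    have hsplit : (∑ i, r i ⊗ₜ[C] s i)
        = r i0 ⊗ₜ[C] ((g i0)⁻¹ • v) + ∑ j, r' j ⊗ₜ[C] s' j := by
      rw [e1, Fin.sum_univ_succAbove (fun i => ((g i0)⁻¹ * g i) • (r i0 ⊗ₜ[C] s i)) i0,
        inv_mul_cancel₀ hgi0, one_smul,
        Fin.sum_univ_succAbove (fun i => r i ⊗ₜ[C] s i) i0,
        Finset.sum_congr rfl fun j (_ : j ∈ Finset.univ) => e2 j,
        Finset.sum_sub_distrib]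
      abel
    have hterm1 : ((g i0)⁻¹ • v) ∈ auxV I := (auxV I).smul_mem _ hv
    have hterm1' : r i0 ⊗ₜ[C] ((g i0)⁻¹ • v) ∈ I := by
      have heq : r i0 ⊗ₜ[C] ((g i0)⁻¹ • v)
          = (r i0 ⊗ₜ[C] (1 : S)) * ((1 : R) ⊗ₜ[C] ((g i0)⁻¹ • v)) := by
        rw [Algebra.TensorProduct.tmul_mul_tmul, mul_one, one_mul]
      rw [heq]
      exact I.mul_mem_left _ _ hterm1
    have htermSp : r i0 ⊗ₜ[C] ((g i0)⁻¹ • v) ∈ Sp :=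
      TwoSidedIdeal.subset_span ⟨r i0, _, hterm1, rfl⟩
    have hz' : (∑ j, r' j ⊗ₜ[C] s' j) ∈ I := by
      have hsub := I.sub_mem hz hterm1'
      rwa [hsplit, add_sub_cancel_left] at hsub
    have hw := IH m (Nat.lt_succ_self m) r' s' hz'
    rw [hsplit]
    exact Sp.add_mem htermSp hw

end Aux

/-- Let `R` be a prime centrally closed ring with center the field `C`, `S` a
`C`-algebra, and `I` a prime ideal of `R ⊗[C] S` with `I ∩ (R ⊗ 1) = 0`. Then
`I = R ⊗[C] (I ∩ S)`, i.e. `I` is generated by the simple tensors `r ⊗ s` with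
`1 ⊗ s ∈ I`. -/
theorem prime_disjoint_ideal_is_extended
    {C R S : Type*} [Field C] [Ring R] [Algebra C R] [Ring S] [Algebra C S]
    (hcenter : Set.range (algebraMap C R) = (Subring.center R : Set R))
    (hprime : ∀ A B : TwoSidedIdeal R, A ≠ ⊥ → B ≠ ⊥ → ∃ a ∈ A, ∃ b ∈ B, a * b ≠ 0)
    (hclosed : ∀ I : TwoSidedIdeal R, I ≠ ⊥ → ∀ f : R → R, IsBimodOn I f →
      ∃ c : C, ∀ x ∈ I, f x = algebraMap C R c * x)
    (I : TwoSidedIdeal (R ⊗[C] S)) (hI : IsPrimeTwoSided I)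
    (hdisj : ∀ r : R, r ⊗ₜ[C] (1 : S) ∈ I → r = 0) :
    I = TwoSidedIdeal.span
      {z : R ⊗[C] S | ∃ (r : R) (s : S), (1 : R) ⊗ₜ[C] s ∈ I ∧ z = r ⊗ₜ[C] s} := by
  apply le_antisymm
  · rw [TwoSidedIdeal.le_iff]
    intro z hz
    rw [SetLike.mem_coe] at hz
    obtain ⟨T, hT⟩ := TensorProduct.exists_finset z
    set n := T.card with hn
    set e := T.equivFin with he
    set rr : Fin n → R := fun i => (e.symm i).1.1 with hrr
    set ss : Fin n → S := fun i => (e.symm i).1.2 with hss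
    have hz2 : z = ∑ i, rr i ⊗ₜ[C] ss i := by
      rw [hT, ← Finset.sum_coe_sort T (fun p => p.1 ⊗ₜ[C] p.2)]
      exact (Fintype.sum_equiv e.symm (fun i => rr i ⊗ₜ[C] ss i)
        (fun x => (x : R × S).1 ⊗ₜ[C] (x : R × S).2) (fun i => rfl)).symm
    rw [SetLike.mem_coe, hz2]
    rw [hz2] at hz
    exact aux_span hclosed I hI hdisj n rr ss hz
  · rw [TwoSidedIdeal.le_iff]
    intro z hz
    rw [SetLike.mem_coe] at hz ⊢
    refine TwoSidedIdeal.mem_span_iff.mp hz I ?_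
    rintro w ⟨a, b, hb, rfl⟩
    have heq : a ⊗ₜ[C] b = (a ⊗ₜ[C] (1 : S)) * ((1 : R) ⊗ₜ[C] b) := by
      rw [Algebra.TensorProduct.tmul_mul_tmul, mul_one, one_mul]
    rw [heq]
    exact I.mul_mem_left _ _ hb
end

section
/- Let a group G act by ring automorphisms on a ring R such that the ideal generated by each G-orbit is finitely generated. If { I_j } is a chain of ideals of R each satisfying (I_j : G) = I for a fixed G-stable ideal I, then the union I* = ⋃_j I_j also satisfies (I* : G) = I. -/
/-- Let a group `G` act by ring automorphisms on `R` so that the two-sided ideal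
generated by each `G`-orbit is finitely generated. If `{I_j}` is a nonempty chain of
two-sided ideals, each having `G`-core equal to a fixed `G`-stable ideal `I`, then the
union of the chain also has `G`-core `I`. -/
theorem core_of_union_of_chain {G R : Type*} [Group G] [Ring R]
    [MulSemiringAction G R]
    (hfg : ∀ r : R, ∃ s : Finset R,
      TwoSidedIdeal.span (Set.range fun g : G => g • r) = TwoSidedIdeal.span ↑s)
    {ι : Type*} [Nonempty ι] (c : ι → TwoSidedIdeal R)
    (hchain : ∀ i j : ι, c i ≤ c j ∨ c j ≤ c i)
    (I : TwoSidedIdeal R)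
    (hcore : ∀ (i : ι) (x : R), (∀ g : G, g • x ∈ c i) ↔ x ∈ I) :
    ∀ x : R, (∀ g : G, ∃ i : ι, g • x ∈ c i) ↔ x ∈ I := by
  -- the union of the chain, as a two-sided ideal
  have hdir : ∀ i j : ι, ∃ k, c i ≤ c k ∧ c j ≤ c k := by
    intro i j
    rcases hchain i j with h | h
    · exact ⟨j, h, le_refl _⟩
    · exact ⟨i, le_refl _, h⟩
  set J : TwoSidedIdeal R := TwoSidedIdeal.mk' {y | ∃ i, y ∈ c i}
    (⟨Classical.arbitrary ι, TwoSidedIdeal.zero_mem _⟩)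
    (by
      rintro a b ⟨i, hi⟩ ⟨j, hj⟩
      obtain ⟨k, hik, hjk⟩ := hdir i j
      exact ⟨k, (c k).add_mem (hik hi) (hjk hj)⟩)
    (by rintro a ⟨i, hi⟩; exact ⟨i, (c i).neg_mem hi⟩)
    (by rintro a b ⟨i, hi⟩; exact ⟨i, (c i).mul_mem_left _ _ hi⟩)
    (by rintro a b ⟨i, hi⟩; exact ⟨i, (c i).mul_mem_right _ _ hi⟩) with hJ
  have memJ : ∀ y : R, y ∈ J ↔ ∃ i, y ∈ c i := by
    intro y; rw [hJ, TwoSidedIdeal.mem_mk']; rfl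
  intro x
  constructor
  · intro h
    obtain ⟨s, hs⟩ := hfg x
    -- every element of s lies in J
    have hsJ : ∀ t ∈ s, ∃ i, t ∈ c i := by
      intro t ht
      have h1 : (t : R) ∈ TwoSidedIdeal.span (Set.range fun g : G => g • x) := by
        rw [hs]; exact TwoSidedIdeal.subset_span (by exact_mod_cast ht)
      have h2 : TwoSidedIdeal.span (Set.range fun g : G => g • x) ≤ J := by
        intro y hy
        refine TwoSidedIdeal.mem_span_iff.1 hy J ?_
        rintro z ⟨g, rfl⟩
        obtain ⟨i, hi⟩ := h g
        exact (memJ _).2 ⟨i, hi⟩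
      exact (memJ t).1 (h2 h1)
    -- find a single index dominating all of s
    have key : ∀ u : Finset R, (∀ t ∈ u, ∃ i, t ∈ c i) → ∃ i, ∀ t ∈ u, t ∈ c i := by
      classical
      intro u
      induction u using Finset.induction with
      | empty => exact fun _ => ⟨Classical.arbitrary ι, by simp⟩
      | @insert a u ha ih =>
        intro hu
        obtain ⟨i, hi⟩ := hu a (Finset.mem_insert_self a u)
        obtain ⟨j, hj⟩ := ih (fun t ht => hu t (Finset.mem_insert_of_mem ht))
        obtain ⟨k, hik, hjk⟩ := hdir i j
        refine ⟨k, fun t ht => ?_⟩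
        rcases Finset.mem_insert.1 ht with rfl | ht
        · exact hik hi
        · exact hjk (hj t ht)
    obtain ⟨i, hi⟩ := key s hsJ
    have horb : TwoSidedIdeal.span (Set.range fun g : G => g • x) ≤ c i := by
      rw [hs]
      intro y hy
      exact TwoSidedIdeal.mem_span_iff.1 hy (c i) (fun t ht => hi t (by exact_mod_cast ht))
    refine (hcore i x).1 (fun g => horb (TwoSidedIdeal.subset_span ⟨g, rfl⟩))
  · intro hx g
    have i := Classical.arbitrary ι
    exact ⟨i, (hcore i x).2 hx g⟩
end

section
/- Let k be an algebraically closed field and let R be a k-algebra satisfying the weak Nullstellensatz, i.e., for every simple R-module V the center of End_R(V) is algebraic over k. Then every primitive ideal of R is rational, i.e., the extended centroid of R modulo the ideal equals k. -/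
theorem IsAlgClosed.exists_algebraMap_eq_of_isAlgebraic {k K : Type*} [Field k] [IsAlgClosed k]
    [Ring K] [IsDomain K] [Algebra k K] {x : K} (hx : IsAlgebraic k x) :
    ∃ c : k, algebraMap k K c = x :=
  minpoly.mem_range_of_degree_eq_one k x <|
    IsAlgClosed.degree_eq_one_of_irreducible k (minpoly.irreducible hx.isIntegral)

theorem isSimpleModule_of_ringHom_surjective {R Q V : Type*} [Ring R] [Ring Q]
    [AddCommGroup V] [Module R V] [Module Q V] {π : R →+* Q} (hπ : Function.Surjective π)
    (hπV : ∀ (r : R) (v : V), π r • v = r • v) [IsSimpleModule R V] : IsSimpleModule Q V :=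
  have : RingHomSurjective π := ⟨hπ⟩
  (LinearMap.isSimpleModule_iff_of_bijective
    { toFun := id, map_add' := fun _ _ => rfl, map_smul' := fun r v => (hπV r v).symm }
    Function.bijective_id).1 ‹_›

namespace TwoSidedIdeal

section SimpleModule

variable {Q V : Type*} [Ring Q] [AddCommGroup V] [Module Q V] [IsSimpleModule Q V]
  {I : TwoSidedIdeal Q}

theorem eq_zero_of_forall_mem_smul_eq_zero (hI : ∃ x ∈ I, ∃ u : V, x • u ≠ 0) {w : V}
    (hw : ∀ y ∈ I, y • w = 0) : w = 0 := by
  by_contra hw0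
  obtain ⟨x, hx, u, hxu⟩ := hI
  obtain ⟨q, rfl⟩ := IsSimpleModule.toSpanSingleton_surjective Q hw0 u
  rw [LinearMap.toSpanSingleton_apply, smul_smul] at hxu
  exact hxu (hw _ (I.mul_mem_right _ _ hx))

theorem exists_forall_exists_mem_smul_eq (hI : ∃ x ∈ I, ∃ u : V, x • u ≠ 0) :
    ∃ u : V, ∀ v : V, ∃ x ∈ I, x • u = v := by
  obtain ⟨x, hx, u, hxu⟩ := hI
  refine ⟨u, fun v => ?_⟩
  obtain ⟨q, rfl⟩ := IsSimpleModule.toSpanSingleton_surjective Q hxu v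
  exact ⟨q * x, I.mul_mem_left _ _ hx, mul_smul _ _ _⟩

theorem exists_end_smul_eq_of_isBimodOn (hI : ∃ x ∈ I, ∃ u : V, x • u ≠ 0) {f : Q → Q}
    (hf : IsBimodOn I f) : ∃ δ : Module.End Q V, ∀ x ∈ I, ∀ w : V, δ (x • w) = f x • w := by
  obtain ⟨u, hu⟩ := exists_forall_exists_mem_smul_eq hI
  let φ : I.asIdeal →ₗ[Q] V := (LinearMap.toSpanSingleton Q V u).domRestrict I.asIdeal
  let ψ : I.asIdeal →ₗ[Q] V :=
    { toFun := fun x => f x • u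
      map_add' := fun x y => by
        simp [hf.1 x (mem_asIdeal.1 x.2) y (mem_asIdeal.1 y.2), add_smul]
      map_smul' := fun q x => by
        simp [hf.2.1 q x (mem_asIdeal.1 x.2), mul_smul] }
  have hφ : Function.Surjective φ := fun v => by
    obtain ⟨x, hx, rfl⟩ := hu v
    exact ⟨⟨x, mem_asIdeal.2 hx⟩, rfl⟩
  have hker : LinearMap.ker φ ≤ LinearMap.ker ψ := by
    rintro ⟨x, hx⟩ (hxu : x • u = 0)
    refine eq_zero_of_forall_mem_smul_eq_zero hI fun y hy => ?_
    have hyx : y * f x = f y * x := by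
      rw [← hf.2.1 y x (mem_asIdeal.1 hx), hf.2.2 x y hy]
    change y • f x • u = 0
    rw [smul_smul, hyx, mul_smul, hxu, smul_zero]
  refine ⟨(LinearMap.ker φ).liftQ ψ hker ∘ₗ (φ.quotKerEquivOfSurjective hφ).symm,
    fun x hx w => ?_⟩
  obtain ⟨y, hy, rfl⟩ := hu w
  have hxy : x • y • u = φ ⟨x * y, mem_asIdeal.2 (I.mul_mem_left _ _ hy)⟩ :=
    (mul_smul _ _ _).symm
  rw [LinearMap.comp_apply, hxy, LinearEquiv.coe_coe,
    LinearMap.quotKerEquivOfSurjective_symm_apply, Submodule.liftQ_apply]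
  change f (x * y) • u = f x • y • u
  rw [hf.2.2 y x hx, mul_smul]

theorem apply_map_eq_map_apply_of_forall_mem_smul (hI : ∃ x ∈ I, ∃ u : V, x • u ≠ 0)
    {f : Q → Q} {δ : V → V} (hδ : ∀ x ∈ I, ∀ w : V, δ (x • w) = f x • w) (g : V →+ V)
    (hg : ∀ (q : Q) (w : V), g (q • w) = q • g w) (v : V) : δ (g v) = g (δ v) := by
  obtain ⟨u, hu⟩ := exists_forall_exists_mem_smul_eq hI
  obtain ⟨x, hx, rfl⟩ := hu v
  rw [hg, hδ x hx, hδ x hx, hg]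

end SimpleModule

theorem exists_mem_center_end_smul_eq {R Q V : Type*} [Ring R] [Ring Q] [AddCommGroup V]
    [Module R V] [Module Q V] {π : R →+* Q} (hπ : Function.Surjective π)
    (hπV : ∀ (r : R) (v : V), π r • v = r • v) [IsSimpleModule R V] {I : TwoSidedIdeal Q}
    (hI : ∃ x ∈ I, ∃ u : V, x • u ≠ 0) {f : Q → Q} (hf : IsBimodOn I f) :
    ∃ δ ∈ Subring.center (Module.End R V), ∀ x ∈ I, ∀ w : V, δ (x • w) = f x • w := by
  have := isSimpleModule_of_ringHom_surjective hπ hπV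
  obtain ⟨δ, hδ⟩ := exists_end_smul_eq_of_isBimodOn hI hf
  refine ⟨{ δ.toAddMonoidHom with map_smul' := fun r v => by simp [← hπV] }, ?_, hδ⟩
  rw [Subring.mem_center_iff]
  intro g
  ext v
  refine (apply_map_eq_map_apply_of_forall_mem_smul hI hδ g.toAddMonoidHom (fun q w => ?_) v).symm
  obtain ⟨r, rfl⟩ := hπ q
  simp [hπV]

abbrev quotientModule {R V : Type*} [Ring R] [AddCommGroup V] [Module R V]
    (P : TwoSidedIdeal R) (hP : ∀ r ∈ P, ∀ v : V, r • v = 0) : Module P.ringCon.Quotient V :=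
  Module.compHom V <| P.ringCon.lift (Module.toAddMonoidEnd R V) fun a b hab =>
    (RingCon.ker_apply _).2 <| AddMonoidHom.ext fun v => sub_eq_zero.1 <| by
      simpa [sub_smul] using hP _ ((P.rel_iff a b).1 hab) v

end TwoSidedIdeal

/-- Let `k` be an algebraically closed field and `R` a `k`-algebra satisfying the weak
Nullstellensatz: for each simple module `V`, the center of `End_R(V)` is algebraic over
`k`. Then every primitive ideal `P = ann_R(V)` is rational: the extended centroid of
`R/P` equals `k`, i.e. every `(R/P,R/P)`-bimodule map on an ideal of `R/P` with zero
left annihilator is multiplication by a scalar from `k`. -/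
theorem primitive_ideals_are_rational
    {k : Type*} [Field k] [IsAlgClosed k] {R : Type*} [Ring R] [Algebra k R]
    (V : Type*) [AddCommGroup V] [Module R V] [Module k V]
    [SMulCommClass R k V] [IsScalarTower k R V]
    (hsimple : IsSimpleModule R V)
    (hNS : ∀ δ ∈ Subring.center (Module.End R V), IsAlgebraic k δ)
    (P : TwoSidedIdeal R) (hP : ∀ r : R, r ∈ P ↔ ∀ v : V, r • v = 0) :
    ∀ I : TwoSidedIdeal P.ringCon.Quotient,
      (∀ r : P.ringCon.Quotient, (∀ x ∈ I, r * x = 0) → r = 0) →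
      ∀ f : P.ringCon.Quotient → P.ringCon.Quotient, IsBimodOn I f →
        ∃ c : k, ∀ x ∈ I, f x = P.ringCon.mk' (algebraMap k R c) * x := by
  intro I _ f hf
  let _ : Module P.ringCon.Quotient V := P.quotientModule fun r hr => (hP r).1 hr
  have hfaithful : ∀ q : P.ringCon.Quotient, (∀ v : V, q • v = 0) → q = 0 := by
    rintro ⟨r⟩ hr
    exact (RingCon.eq _).2 ((hP r).2 hr)
  by_cases hI : ∃ x ∈ I, ∃ u : V, x • u ≠ 0
  · obtain ⟨δ, hδc, hδ⟩ :=
      TwoSidedIdeal.exists_mem_center_end_smul_eq P.ringCon.mk'_surjective (fun _ _ => rfl) hI hf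
    -- `Module.End.divisionRing` (Schur's lemma) supplies the `IsDomain` instance
    classical
    obtain ⟨c, hc⟩ := IsAlgClosed.exists_algebraMap_eq_of_isAlgebraic (hNS δ hδc)
    refine ⟨c, fun x hx => sub_eq_zero.1 <| hfaithful _ fun v => ?_⟩
    rw [sub_smul, ← hδ x hx, ← hc, Module.algebraMap_end_apply, mul_smul,
      ← algebraMap_smul R c (x • v)]
    exact sub_self _
  · push Not at hI
    refine ⟨0, fun x hx => ?_⟩
    obtain rfl : x = 0 := hfaithful x (hI x hx)
    simpa using hf.2.1 0 0 I.zero_mem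
end

section
/- Let R be a prime k-algebra that is rational (i.e., its extended centroid equals k) and let K/k be a field extension. Then R ⊗_k K is a prime K-algebra that is K-rational, i.e., the extended centroid of R ⊗_k K equals K. -/
open TensorProduct

/-!
The heart of the argument is Martindale's lemma: in a prime ring `R` with extended centroid `k`,
if `∑ aᵢ r bᵢ = 0` for all `r` and the `bᵢ` are `k`-independent, then all `aᵢ = 0`. Expanding an
element of `R ⊗[k] K` along a `k`-basis `eᵢ` of `R` and taking coordinates along a `k`-basis of
`K`, the lemma extends to coefficients in `R ⊗[k] K` against the `eᵢ ⊗ 1`. Since every `1 ⊗ c` is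
central, `a (r ⊗ 1) b` expands as `∑ a (1 ⊗ βᵢ) (r ⊗ 1) (eᵢ ⊗ 1)`, where `βᵢ` are the
coordinates of `b`. Hence `a (r ⊗ 1) b = 0` for all `r` forces `a = 0` or `b = 0`, which is
primeness, and `a (r ⊗ 1) b = b (r ⊗ 1) a` for all `r` forces `b ∈ (1 ⊗ K) a`. For a bimodule
map `f` on an ideal `I`, the identity `a s f(a) = f(a s a) = f(a) s a` therefore gives
`f(a) = (1 ⊗ cₐ) a`, and primeness makes `cₐ` independent of `a`.
-/

section Ring

variable {T : Type*} [Ring T]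

theorem TwoSidedIdeal.ne_bot_iff {I : TwoSidedIdeal T} : I ≠ ⊥ ↔ ∃ x ∈ I, x ≠ 0 := by
  simp [eq_bot_iff, SetLike.le_def]

theorem IsBimodOn.map_zero {I : TwoSidedIdeal T} {f : T → T} (hf : IsBimodOn I f) :
    f 0 = 0 := by
  simpa using hf.2.1 0 0 I.zero_mem

theorem IsBimodOn.mul_mul_map {I : TwoSidedIdeal T} {f : T → T}
    (hf : IsBimodOn I f) {a x : T} (ha : a ∈ I) (hx : x ∈ I) (s : T) :
    a * s * f x = f a * s * x := by
  rw [← hf.2.1 _ x hx, mul_assoc, hf.2.2 _ a ha, mul_assoc]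

theorem IsPrimeRing.eq_zero_or_eq_zero_of_forall_mul_mul (hT : IsPrimeRing T) {a b : T}
    (h : ∀ s, a * s * b = 0) : a = 0 ∨ b = 0 := by
  let A : TwoSidedIdeal T := .mk' {x | ∀ s, x * s * b = 0} (by simp)
    (fun hx hy s => by simp only [add_mul, hx s, hy s, add_zero])
    (fun hx s => by simp only [neg_mul, hx s, neg_zero])
    (fun {x y} hy s => by rw [mul_assoc x y, mul_assoc x, hy, mul_zero])
    (fun {x y} hx s => by rw [mul_assoc x y s, hx])
  let B : TwoSidedIdeal T := .mk' {y | ∀ x ∈ A, x * y = 0} (by simp)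
    (fun hx hy z hz => by rw [mul_add, hx z hz, hy z hz, add_zero])
    (fun hx z hz => by rw [mul_neg, hx z hz, neg_zero])
    (fun {x y} hy z hz => by rw [← mul_assoc, hy _ (A.mul_mem_right z x hz)])
    (fun {x y} hx z hz => by rw [← mul_assoc, hx z hz, zero_mul])
  have haA : a ∈ A := by simpa [A] using h
  have hbB : b ∈ B := fun x hx => by simpa [A] using hx 1
  by_contra! hab
  obtain ⟨x, hx, y, hy, hxy⟩ :=
    hT.2 A B (TwoSidedIdeal.ne_bot_iff.2 ⟨a, haA, hab.1⟩)
      (TwoSidedIdeal.ne_bot_iff.2 ⟨b, hbB, hab.2⟩)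
  exact hxy (by simpa using hy x hx)

theorem IsPrimeRing.eq_of_forall_mul_mul_eq (hT : IsPrimeRing T) {a u v : T} (ha : a ≠ 0)
    (h : ∀ s, u * s * a = v * s * a) : u = v :=
  sub_eq_zero.1 <| (hT.eq_zero_or_eq_zero_of_forall_mul_mul fun s => by
    rw [sub_mul, sub_mul, h, sub_self]).resolve_right ha

/-- The domain of the bimodule map `p a q ↦ p b q`: `x` lies in it when some `u` satisfies
`u s a = x s b` for all `s`, and then `u` is the image of `x`. -/
def sandwichIdeal (a b : T) : TwoSidedIdeal T :=
  .mk' {x | ∃ u, ∀ s, u * s * a = x * s * b} ⟨0, by simp⟩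
    (fun ⟨u, hu⟩ ⟨v, hv⟩ => ⟨u + v, fun s => by simp only [add_mul, hu, hv]⟩)
    (fun ⟨u, hu⟩ => ⟨-u, fun s => by simp only [neg_mul, hu]⟩)
    (fun {x _} ⟨u, hu⟩ => ⟨x * u, fun s => by simp only [mul_assoc] at hu ⊢; rw [hu]⟩)
    (fun {_ y} ⟨u, hu⟩ => ⟨u * y, fun s => by simpa only [mul_assoc] using hu (y * s)⟩)

theorem mem_sandwichIdeal {a b x : T} :
    x ∈ sandwichIdeal a b ↔ ∃ u, ∀ s, u * s * a = x * s * b :=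
  TwoSidedIdeal.mem_mk' ..

theorem IsPrimeRing.exists_isBimodOn_sandwichIdeal (hT : IsPrimeRing T) {a : T} (ha : a ≠ 0)
    (b : T) : ∃ f : T → T, IsBimodOn (sandwichIdeal a b) f ∧
      ∀ x ∈ sandwichIdeal a b, ∀ s, f x * s * a = x * s * b := by
  choose! f hf using fun x (hx : x ∈ sandwichIdeal a b) => mem_sandwichIdeal.1 hx
  refine ⟨f, ⟨fun x hx y hy => ?_, fun r x hx => ?_, fun r x hx => ?_⟩, hf⟩ <;>
    refine hT.eq_of_forall_mul_mul_eq ha fun s => ?_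
  · simp only [add_mul, hf _ (add_mem hx hy), hf x hx, hf y hy]
  · rw [hf _ (TwoSidedIdeal.mul_mem_left _ r x hx)]
    simpa only [mul_assoc] using congr(r * $(hf x hx s)).symm
  · simpa only [mul_assoc] using (hf _ (TwoSidedIdeal.mul_mem_right _ x r hx) s).trans
      (by simpa only [mul_assoc] using (hf x hx (r * s)).symm)

end Ring

/-- `R` is rational over `k`, i.e. its extended centroid is `k`, phrased without the
Martindale quotient ring: bimodule maps on ideals with zero left annihilator are scalars. -/
def IsRationalAlgebra (k R : Type*) [CommSemiring k] [Ring R] [Algebra k R] : Prop :=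
  ∀ I : TwoSidedIdeal R, (∀ r : R, (∀ x ∈ I, r * x = 0) → r = 0) →
    ∀ f : R → R, IsBimodOn I f → ∃ c : k, ∀ x ∈ I, f x = c • x

section Martindale

variable {k R : Type*} [Ring R]

theorem IsRationalAlgebra.exists_eq_smul_of_forall_mul_mul_comm [CommSemiring k] [Algebra k R]
    (hprime : IsPrimeRing R) (hrat : IsRationalAlgebra k R) {a b : R} (ha : a ≠ 0)
    (hab : ∀ s, a * s * b = b * s * a) :
    ∃ c : k, b = c • a := by
  obtain ⟨f, hf, hfab⟩ := hprime.exists_isBimodOn_sandwichIdeal ha b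
  have haI : a ∈ sandwichIdeal a b := mem_sandwichIdeal.2 ⟨b, fun s => (hab s).symm⟩
  have hann : ∀ r, (∀ x ∈ sandwichIdeal a b, r * x = 0) → r = 0 := fun r hr =>
    (hprime.eq_zero_or_eq_zero_of_forall_mul_mul fun s => by
      rw [mul_assoc]; exact hr _ (TwoSidedIdeal.mul_mem_left _ s a haI)).resolve_right ha
  obtain ⟨c, hc⟩ := hrat _ hann f hf
  refine ⟨c, ?_⟩
  rw [← hc a haI]
  exact hprime.eq_of_forall_mul_mul_eq ha fun s => (hab s).symm.trans (hfab a haI s).symm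

/-- Martindale's lemma. -/
theorem IsRationalAlgebra.eq_zero_of_forall_sum_mul_mul_eq_zero [Field k] [Algebra k R]
    (hprime : IsPrimeRing R) (hrat : IsRationalAlgebra k R) {ι : Type*} {b : ι → R} {s : Finset ι}
    (hb : LinearIndepOn k b (s : Set ι)) {a : ι → R} (h : ∀ r, ∑ i ∈ s, a i * r * b i = 0) :
    ∀ i ∈ s, a i = 0 := by
  classical
  induction s using Finset.induction_on generalizing a with
  | empty => simp
  | insert j s hj ih =>
    rw [Finset.coe_insert, linearIndepOn_insert (by simpa using hj)] at hb
    obtain ⟨hb, hbj⟩ := hb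
    simp only [Finset.sum_insert hj] at h
    have hcomm : ∀ i ∈ s, ∀ r, a j * r * a i = a i * r * a j := by
      -- `a j r` times the relation at `x`, minus the relation at `r a j x`, has no `b j` term.
      intro i hi r
      refine sub_eq_zero.1 (ih hb (a := fun i => a j * r * a i - a i * r * a j) (fun x => ?_) i hi)
      calc ∑ i ∈ s, (a j * r * a i - a i * r * a j) * x * b i
          = a j * r * (a j * x * b j + ∑ i ∈ s, a i * x * b i)
            - (a j * (r * a j * x) * b j + ∑ i ∈ s, a i * (r * a j * x) * b i) := by
            simp only [mul_add, Finset.mul_sum, sub_mul, Finset.sum_sub_distrib, mul_assoc]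
            abel
        _ = 0 := by rw [h, h, mul_zero, sub_zero]
    have haj : a j = 0 := by
      by_contra haj
      choose! c hc using fun i hi =>
        hrat.exists_eq_smul_of_forall_mul_mul_comm hprime haj (hcomm i hi)
      have hdep : b j + ∑ i ∈ s, c i • b i = 0 := by
        refine (hprime.eq_zero_or_eq_zero_of_forall_mul_mul fun r => ?_).resolve_left haj
        rw [← h r, mul_add, Finset.mul_sum]
        congr 1
        refine Finset.sum_congr rfl fun i hi => ?_
        rw [hc i hi, mul_smul_comm, smul_mul_assoc, smul_mul_assoc]
      refine hbj ?_
      rw [eq_neg_of_add_eq_zero_left hdep]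
      exact neg_mem <| Submodule.sum_mem _ fun i hi =>
        Submodule.smul_mem _ _ (Submodule.subset_span ⟨i, hi, rfl⟩)
    exact Finset.forall_mem_insert _ _ _ |>.2 ⟨haj, ih hb fun r => by simpa [haj] using h r⟩

end Martindale

section CommSemiring

variable {k A B : Type*} [CommSemiring k] [Semiring A] [Algebra k A] [CommSemiring B]
  [Algebra k B]

theorem commute_one_tmul (c : B) (u : A ⊗[k] B) : Commute ((1 : A) ⊗ₜ[k] c) u := by
  induction u using TensorProduct.induction_on with
  | zero => exact Commute.zero_right _
  | tmul x y => exact (Commute.one_left x).tmul (Commute.all c y)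
  | add u v hu hv => exact hu.add_right hv

theorem isUnit_one_tmul {c : B} (hc : IsUnit c) : IsUnit ((1 : A) ⊗ₜ[k] c) :=
  hc.map Algebra.TensorProduct.includeRight

theorem equivFinsuppOfBasisRight_mul_tmul_one {κ : Type*} [DecidableEq κ]
    (𝒞 : Module.Basis κ k B) (u : A ⊗[k] B) (y : A) (t : κ) :
    equivFinsuppOfBasisRight 𝒞 (u * (y ⊗ₜ 1)) t = equivFinsuppOfBasisRight 𝒞 u t * y := by
  induction u using TensorProduct.induction_on with
  | zero => simp
  | tmul x c =>
    rw [Algebra.TensorProduct.tmul_mul_tmul, mul_one, equivFinsuppOfBasisRight_apply_tmul_apply,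
      equivFinsuppOfBasisRight_apply_tmul_apply, smul_mul_assoc]
  | add u v hu hv =>
    rw [add_mul, map_add, map_add, Finsupp.add_apply, Finsupp.add_apply, hu, hv, add_mul]

end CommSemiring

section Field

variable {k R K : Type*} [Field k] [Ring R] [Algebra k R] [Field K] [Algebra k K]

theorem IsRationalAlgebra.eq_zero_of_forall_sum_mul_tmul_one_mul_eq_zero (hprime : IsPrimeRing R)
    (hrat : IsRationalAlgebra k R) {ι : Type*} {b : ι → R} {s : Finset ι}
    (hb : LinearIndepOn k b (s : Set ι)) {x : ι → R ⊗[k] K}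
    (h : ∀ r : R, ∑ i ∈ s, x i * (r ⊗ₜ 1) * (b i ⊗ₜ 1) = 0) : ∀ i ∈ s, x i = 0 := by
  classical
  intro i hi
  let 𝒞 := Module.Basis.ofVectorSpace k K
  refine (equivFinsuppOfBasisRight 𝒞).injective (Finsupp.ext fun t => ?_)
  rw [map_zero, Finsupp.zero_apply]
  refine hrat.eq_zero_of_forall_sum_mul_mul_eq_zero hprime hb
    (a := fun i => equivFinsuppOfBasisRight 𝒞 (x i) t) (fun r => ?_) i hi
  simpa [equivFinsuppOfBasisRight_mul_tmul_one] using congr(equivFinsuppOfBasisRight 𝒞 $(h r) t)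

variable {ι : Type*} [DecidableEq ι] (e : Module.Basis ι k R)

theorem sum_tmul_equivFinsuppOfBasisLeft (u : R ⊗[k] K) {s : Finset ι}
    (hs : (equivFinsuppOfBasisLeft e u).support ⊆ s) :
    ∑ i ∈ s, e i ⊗ₜ[k] equivFinsuppOfBasisLeft e u i = u := by
  classical
  conv_rhs => rw [← (equivFinsuppOfBasisLeft e).symm_apply_apply u,
    equivFinsuppOfBasisLeft_symm_apply]
  exact (Finsupp.sum_of_support_subset _ hs _ fun i _ => tmul_zero _ _).symm

theorem exists_equivFinsuppOfBasisLeft_ne_zero {u : R ⊗[k] K} (hu : u ≠ 0) :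
    ∃ i, equivFinsuppOfBasisLeft e u i ≠ 0 := by
  by_contra! h
  exact hu ((equivFinsuppOfBasisLeft e).map_eq_zero_iff.1 (Finsupp.ext h))

theorem mul_tmul_one_mul_eq_sum (x b : R ⊗[k] K) (r : R) {s : Finset ι}
    (hs : (equivFinsuppOfBasisLeft e b).support ⊆ s) :
    x * (r ⊗ₜ 1) * b =
      ∑ i ∈ s, x * (1 ⊗ₜ equivFinsuppOfBasisLeft e b i) * (r ⊗ₜ 1) * (e i ⊗ₜ 1) := by
  conv_lhs => rw [← sum_tmul_equivFinsuppOfBasisLeft e b hs]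
  rw [Finset.mul_sum]
  refine Finset.sum_congr rfl fun i _ => ?_
  rw [show e i ⊗ₜ[k] equivFinsuppOfBasisLeft e b i =
      (1 ⊗ₜ equivFinsuppOfBasisLeft e b i) * (e i ⊗ₜ 1) by simp, ← mul_assoc,
    mul_assoc x, ← (commute_one_tmul _ _).eq, ← mul_assoc]

theorem IsRationalAlgebra.mul_one_tmul_equivFinsuppOfBasisLeft_eq (hprime : IsPrimeRing R)
    (hrat : IsRationalAlgebra k R) {x y a b : R ⊗[k] K}
    (h : ∀ r : R, x * (r ⊗ₜ 1) * b = y * (r ⊗ₜ 1) * a) (i : ι) :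
    x * (1 ⊗ₜ equivFinsuppOfBasisLeft e b i) = y * (1 ⊗ₜ equivFinsuppOfBasisLeft e a i) := by
  set s := (equivFinsuppOfBasisLeft e a).support ∪ (equivFinsuppOfBasisLeft e b).support
  by_cases hi : i ∈ s
  · refine sub_eq_zero.1 <| hrat.eq_zero_of_forall_sum_mul_tmul_one_mul_eq_zero hprime
      (e.linearIndependent.linearIndepOn _)
      (x := fun i => x * (1 ⊗ₜ equivFinsuppOfBasisLeft e b i) -
        y * (1 ⊗ₜ equivFinsuppOfBasisLeft e a i))
      (fun r => ?_) i hi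
    simp only [sub_mul, Finset.sum_sub_distrib]
    rw [← mul_tmul_one_mul_eq_sum e x b r Finset.subset_union_right,
      ← mul_tmul_one_mul_eq_sum e y a r Finset.subset_union_left, h, sub_self]
  · simp_all [s]

theorem IsRationalAlgebra.eq_zero_or_eq_zero_of_forall_mul_tmul_one_mul (hprime : IsPrimeRing R)
    (hrat : IsRationalAlgebra k R) {a b : R ⊗[k] K} (h : ∀ r : R, a * (r ⊗ₜ 1) * b = 0) :
    a = 0 ∨ b = 0 := by
  classical
  let e := Module.Basis.ofVectorSpace k R
  refine or_iff_not_imp_right.2 fun hb => ?_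
  obtain ⟨i, hi⟩ := exists_equivFinsuppOfBasisLeft_ne_zero e hb
  have := hrat.mul_one_tmul_equivFinsuppOfBasisLeft_eq e hprime (y := 0) (a := 0)
    (by simpa using h) i
  rwa [zero_mul, (isUnit_one_tmul (.mk0 _ hi)).mul_left_eq_zero] at this

theorem IsRationalAlgebra.exists_eq_one_tmul_mul_of_forall_mul_tmul_one_mul_comm
    (hprime : IsPrimeRing R) (hrat : IsRationalAlgebra k R) {a b : R ⊗[k] K} (ha : a ≠ 0)
    (h : ∀ r : R, a * (r ⊗ₜ 1) * b = b * (r ⊗ₜ 1) * a) : ∃ c : K, b = (1 ⊗ₜ c) * a := by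
  classical
  let e := Module.Basis.ofVectorSpace k R
  set α := equivFinsuppOfBasisLeft e a
  set β := equivFinsuppOfBasisLeft e b
  obtain ⟨i, hi⟩ := exists_equivFinsuppOfBasisLeft_ne_zero e ha
  have hab := hrat.mul_one_tmul_equivFinsuppOfBasisLeft_eq e hprime h i
  refine ⟨β i / α i, ?_⟩
  calc b = b * (1 ⊗ₜ α i) * (1 ⊗ₜ (α i)⁻¹) := by
        rw [mul_assoc, Algebra.TensorProduct.tmul_mul_tmul, mul_one, mul_inv_cancel₀ hi,
          ← Algebra.TensorProduct.one_def, mul_one]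
    _ = a * (1 ⊗ₜ (β i / α i)) := by
        rw [← hab, mul_assoc, Algebra.TensorProduct.tmul_mul_tmul, one_mul, div_eq_mul_inv]
    _ = (1 ⊗ₜ (β i / α i)) * a := (commute_one_tmul _ _).eq.symm

theorem IsPrimeRing.tensorProduct_s10 (hprime : IsPrimeRing R) (hrat : IsRationalAlgebra k R) :
    IsPrimeRing (R ⊗[k] K) := by
  have := hprime.1
  refine ⟨inferInstance, fun A B hA hB => ?_⟩
  obtain ⟨a, haA, ha⟩ := TwoSidedIdeal.ne_bot_iff.1 hA
  obtain ⟨b, hbB, hb⟩ := TwoSidedIdeal.ne_bot_iff.1 hB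
  obtain ⟨r, hr⟩ : ∃ r : R, a * (r ⊗ₜ 1) * b ≠ 0 := by
    by_contra! h
    exact (hrat.eq_zero_or_eq_zero_of_forall_mul_tmul_one_mul hprime h).elim ha hb
  exact ⟨a, haA, _, B.mul_mem_left _ b hbB, by rwa [← mul_assoc]⟩

theorem IsRationalAlgebra.exists_eq_one_tmul_mul_of_isBimodOn (hprime : IsPrimeRing R)
    (hrat : IsRationalAlgebra k R) {I : TwoSidedIdeal (R ⊗[k] K)}
    (hI : ∀ r : R ⊗[k] K, (∀ x ∈ I, r * x = 0) → r = 0) {f : R ⊗[k] K → R ⊗[k] K}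
    (hf : IsBimodOn I f) : ∃ c : K, ∀ x ∈ I, f x = ((1 : R) ⊗ₜ[k] c) * x := by
  have hprime' : IsPrimeRing (R ⊗[k] K) := hprime.tensorProduct_s10 hrat
  have := hprime'.1
  have hlocal : ∀ x ∈ I, ∃ c : K, f x = (1 ⊗ₜ c) * x := fun x hx => by
    by_cases hx0 : x = 0
    · exact ⟨0, by rw [hx0, hf.map_zero, mul_zero]⟩
    exact hrat.exists_eq_one_tmul_mul_of_forall_mul_tmul_one_mul_comm hprime hx0 fun r =>
      hf.mul_mul_map hx hx _
  obtain ⟨a, haI, ha⟩ : ∃ a ∈ I, a ≠ 0 := by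
    by_contra! h
    exact one_ne_zero (hI 1 fun x hx => by rw [h x hx, mul_zero] : (1 : R ⊗[k] K) = 0)
  obtain ⟨c, hc⟩ := hlocal a haI
  refine ⟨c, fun x hx => ?_⟩
  obtain ⟨d, hd⟩ := hlocal x hx
  have hcd : ∀ s, (1 ⊗ₜ (c - d)) * a * s * x = 0 := fun s => by
    have : (1 ⊗ₜ c) * a * s * x = (1 ⊗ₜ d) * a * s * x := by
      rw [← hc, ← hf.mul_mul_map haI hx, hd, ← mul_assoc, ← (commute_one_tmul d (a * s)).eq,
        ← mul_assoc]
    rw [tmul_sub, sub_mul, sub_mul, sub_mul, this, sub_self]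
  rcases hprime'.eq_zero_or_eq_zero_of_forall_mul_mul hcd with h | rfl
  · have hcd : c - d = 0 := by
      by_contra hne
      exact ha ((isUnit_one_tmul (.mk0 _ hne)).mul_right_eq_zero.1 h)
    rw [hd, sub_eq_zero.1 hcd]
  · rw [hf.map_zero, mul_zero]

end Field

/-- Let `R` be a prime `k`-algebra which is rational over `k` (its extended centroid is
`k`: every bimodule map on an ideal with zero left annihilator is a scalar in `k`), and
let `K/k` be a field extension. Then `R ⊗[k] K` is a prime `K`-algebra which is
rational over `K`. -/
theorem rational_scalar_extension
    {k : Type*} [Field k] {R : Type*} [Ring R] [Algebra k R]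
    {K : Type*} [Field K] [Algebra k K]
    (hprime : IsPrimeRing R)
    (hrat : ∀ I : TwoSidedIdeal R, (∀ r : R, (∀ x ∈ I, r * x = 0) → r = 0) →
      ∀ f : R → R, IsBimodOn I f → ∃ c : k, ∀ x ∈ I, f x = c • x) :
    IsPrimeRing (R ⊗[k] K) ∧
      ∀ I : TwoSidedIdeal (R ⊗[k] K),
        (∀ r : R ⊗[k] K, (∀ x ∈ I, r * x = 0) → r = 0) →
        ∀ f : R ⊗[k] K → R ⊗[k] K, IsBimodOn I f →
          ∃ c : K, ∀ x ∈ I, f x = ((1 : R) ⊗ₜ[k] c) * x :=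
  ⟨hprime.tensorProduct_s10 hrat, fun _ hI _ hf =>
    IsRationalAlgebra.exists_eq_one_tmul_mul_of_isBimodOn hprime hrat hI hf⟩
end

section
/- Let a group G act by automorphisms on a semiprime ring R, with the induced action on the extended centroid C(R). If R is G-prime then the invariant subring C(R)^G is a field; conversely, if R is semiprime and C(R)^G is a field then R is G-prime. -/
/-- `(Q, ι)` is a right Amitsur–Martindale ring of quotients of `R`. -/
structure IsMartindaleQuot {R Q : Type*} [Ring R] [Ring Q] (ι : R →+* Q) : Prop where
  inj : Function.Injective ι
  dom : ∀ q : Q, ∃ I : TwoSidedIdeal R,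
    (∀ r : R, (∀ x ∈ I, r * x = 0) → r = 0) ∧ ∀ x ∈ I, ∃ r : R, q * ι x = ι r
  ann : ∀ (q : Q) (I : TwoSidedIdeal R), (∀ r : R, (∀ x ∈ I, r * x = 0) → r = 0) →
    (∀ x ∈ I, q * ι x = 0) → q = 0
  lift : ∀ (I : TwoSidedIdeal R) (f : R → R),
    (∀ r : R, (∀ x ∈ I, r * x = 0) → r = 0) →
    (∀ x ∈ I, ∀ y ∈ I, f (x + y) = f x + f y) →
    (∀ x ∈ I, ∀ r : R, f (x * r) = f x * r) →
    ∃ q : Q, ∀ x ∈ I, q * ι x = ι (f x)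

/-- An ideal is `G`-stable if it is preserved by the action of every `g ∈ G`. -/
def IsGStable (G : Type*) {R : Type*} [Group G] [Ring R] [MulSemiringAction G R]
    (I : TwoSidedIdeal R) : Prop :=
  ∀ g : G, ∀ x ∈ I, g • x ∈ I

/-- `R` is a `G`-prime ring: `R ≠ 0` and the product of two nonzero `G`-stable ideals
is nonzero. -/
def IsGPrimeRing (G R : Type*) [Group G] [Ring R] [MulSemiringAction G R] : Prop :=
  Nontrivial R ∧ ∀ A B : TwoSidedIdeal R, IsGStable G A → IsGStable G B →
    A ≠ ⊥ → B ≠ ⊥ → ∃ a ∈ A, ∃ b ∈ B, a * b ≠ 0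

section Aux

variable {G R Q : Type*} [Group G] [Ring R] [MulSemiringAction G R] [Ring Q]

/-- The left annihilator of a two-sided ideal, as a two-sided ideal. -/
def lAnn (A : TwoSidedIdeal R) : TwoSidedIdeal R :=
  TwoSidedIdeal.mk' {r | ∀ a ∈ A, r * a = 0}
    (fun a _ => zero_mul a)
    (fun {x y} hx hy a ha => by rw [add_mul, hx a ha, hy a ha, add_zero])
    (fun {x} hx a ha => by rw [neg_mul, hx a ha, neg_zero])
    (fun {x y} hy a ha => by rw [mul_assoc, hy a ha, mul_zero])
    (fun {x y} hx a ha => by rw [mul_assoc]; exact hx _ (A.mul_mem_left y a ha))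

lemma mem_lAnn {A : TwoSidedIdeal R} {r : R} : r ∈ lAnn A ↔ ∀ a ∈ A, r * a = 0 :=
  TwoSidedIdeal.mem_mk' _ _ _ _ _ _ r

lemma lAnn_gstable {A : TwoSidedIdeal R} (hA : IsGStable G A) : IsGStable G (lAnn A) := by
  intro g x hx
  rw [mem_lAnn] at hx ⊢
  intro a ha
  have : g • (x * (g⁻¹ • a)) = 0 := by rw [hx _ (hA g⁻¹ a ha), smul_zero]
  rwa [smul_mul', smul_inv_smul] at this

lemma ne_bot_iff {A : TwoSidedIdeal R} : A ≠ ⊥ ↔ ∃ a ∈ A, a ≠ 0 := by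
  constructor
  · intro h
    by_contra hc
    push_neg at hc
    exact h (eq_bot_iff.2 fun x hx => (TwoSidedIdeal.mem_bot R).2 (hc x hx))
  · rintro ⟨a, ha, ha0⟩ h
    rw [h] at ha
    exact ha0 ((TwoSidedIdeal.mem_bot R).1 ha)

/-- From semiprimeness: if two ideals mutually annihilate, their intersection is zero. -/
lemma eq_zero_of_mem_inter
    (hsemiprime : ∀ J : TwoSidedIdeal R, (∀ a ∈ J, ∀ b ∈ J, a * b = 0) → J = ⊥)
    (J1 J2 : TwoSidedIdeal R) (hmul : ∀ u ∈ J1, ∀ v ∈ J2, u * v = 0)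
    {x : R} (h1 : x ∈ J1) (h2 : x ∈ J2) : x = 0 := by
  set J : TwoSidedIdeal R := TwoSidedIdeal.mk' {r | r ∈ J1 ∧ r ∈ J2}
    ⟨J1.zero_mem, J2.zero_mem⟩
    (fun hx hy => ⟨J1.add_mem hx.1 hy.1, J2.add_mem hx.2 hy.2⟩)
    (fun hx => ⟨J1.neg_mem hx.1, J2.neg_mem hx.2⟩)
    (fun {x y} hy => ⟨J1.mul_mem_left x y hy.1, J2.mul_mem_left x y hy.2⟩)
    (fun {x y} hx => ⟨J1.mul_mem_right x y hx.1, J2.mul_mem_right x y hx.2⟩) with hJ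
  have memJ : ∀ r : R, r ∈ J ↔ r ∈ J1 ∧ r ∈ J2 := fun r =>
    TwoSidedIdeal.mem_mk' _ _ _ _ _ _ r
  have : J = ⊥ := by
    apply hsemiprime
    intro a ha b hb
    exact hmul a ((memJ a).1 ha).1 b ((memJ b).1 hb).2
  have : x ∈ (⊥ : TwoSidedIdeal R) := this ▸ (memJ x).2 ⟨h1, h2⟩
  exact (TwoSidedIdeal.mem_bot R).1 this

variable (ι : R →+* Q)

/-- Two elements of `Q` agreeing (by right multiplication) on a dense ideal are equal. -/
lemma eq_of_dense (hQ : IsMartindaleQuot ι) {p p' : Q} (I : TwoSidedIdeal R)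
    (hI : ∀ r : R, (∀ x ∈ I, r * x = 0) → r = 0)
    (h : ∀ x ∈ I, p * ι x = p' * ι x) : p = p' := by
  have := hQ.ann (p - p') I hI (fun x hx => by rw [sub_mul, h x hx, sub_self])
  rwa [sub_eq_zero] at this

/-- An element of `Q` commuting with the image of `R` is central. -/
lemma mem_center_of_comm (hQ : IsMartindaleQuot ι) {p : Q}
    (h : ∀ r : R, p * ι r = ι r * p) : p ∈ Subring.center Q := by
  rw [Subring.mem_center_iff]
  intro z
  obtain ⟨I, hI, hdom⟩ := hQ.dom z
  apply eq_of_dense ι hQ I hI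
  intro x hx
  obtain ⟨w, hw⟩ := hdom x hx
  calc z * p * ι x = z * (ι x * p) := by rw [mul_assoc, ← h x]
    _ = z * ι x * p := by rw [mul_assoc]
    _ = ι w * p := by rw [hw]
    _ = p * ι w := (h w).symm
    _ = p * (z * ι x) := by rw [hw]
    _ = p * z * ι x := by rw [mul_assoc]

end Aux

/-- Let a group `G` act on a semiprime ring `R`, and extend the action to the
Amitsur–Martindale quotient ring `Q` and hence to the extended centroid
`C(R) = Z(Q)`. Then `R` is `G`-prime if and only if the invariants `C(R)^G` form a
field (every nonzero `G`-invariant central element of `Q` has a `G`-invariant central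
inverse, and `0 ≠ 1`). -/
theorem GPrime_iff_invariant_centroid_is_field
    {G R : Type*} [Group G] [Ring R] [MulSemiringAction G R]
    (hsemiprime : ∀ J : TwoSidedIdeal R, (∀ a ∈ J, ∀ b ∈ J, a * b = 0) → J = ⊥)
    {Q : Type*} [Ring Q] (ι : R →+* Q) (hQ : IsMartindaleQuot ι)
    [MulSemiringAction G Q] (hequiv : ∀ (g : G) (r : R), g • ι r = ι (g • r)) :
    IsGPrimeRing G R ↔
      ((0 : Q) ≠ 1 ∧
        ∀ q : Q, q ∈ Subring.center Q → (∀ g : G, g • q = q) → q ≠ 0 →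
          ∃ q' : Q, q' ∈ Subring.center Q ∧ (∀ g : G, g • q' = q') ∧ q * q' = 1) := by
  constructor
  · rintro ⟨hnt, hGP⟩
    haveI := hnt
    constructor
    · intro h01
      have : (0 : R) = 1 := hQ.inj (by rw [map_zero, map_one, h01])
      exact zero_ne_one this
    · intro q hqc hqg hq0
      classical
      have hqcomm : ∀ z : Q, q * z = z * q := fun z =>
        (Subring.mem_center_iff.1 hqc z).symm
      -- the ideal K = { s | ∃ x, q ιx = ιs }
      set K : TwoSidedIdeal R := TwoSidedIdeal.mk' {s | ∃ x : R, q * ι x = ι s}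
        ⟨0, by rw [map_zero, mul_zero]⟩
        (fun {s t} hs ht => by
          obtain ⟨x, hx⟩ := hs; obtain ⟨y, hy⟩ := ht
          exact ⟨x + y, by rw [map_add, mul_add, hx, hy, map_add]⟩)
        (fun {s} hs => by
          obtain ⟨x, hx⟩ := hs
          exact ⟨-x, by rw [map_neg, mul_neg, hx, map_neg]⟩)
        (fun {r s} hs => by
          obtain ⟨x, hx⟩ := hs
          refine ⟨r * x, ?_⟩
          rw [map_mul, map_mul, ← mul_assoc, hqcomm (ι r), mul_assoc, hx])
        (fun {s r} hs => by
          obtain ⟨x, hx⟩ := hs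
          exact ⟨x * r, by rw [map_mul, map_mul, ← mul_assoc, hx]⟩) with hK
      have memK : ∀ s : R, s ∈ K ↔ ∃ x : R, q * ι x = ι s := fun s =>
        TwoSidedIdeal.mem_mk' _ _ _ _ _ _ s
      have hKg : IsGStable G K := by
        intro g s hs
        obtain ⟨x, hx⟩ := (memK s).1 hs
        refine (memK _).2 ⟨g • x, ?_⟩
        have : g • (q * ι x) = g • ι s := by rw [hx]
        rwa [smul_mul', hqg, hequiv, hequiv] at this
      have hKne : K ≠ ⊥ := by
        rw [ne_bot_iff]
        by_contra hc
        push_neg at hc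
        obtain ⟨I, hI, hdom⟩ := hQ.dom q
        refine hq0 (hQ.ann q I hI fun x hx => ?_)
        obtain ⟨r, hr⟩ := hdom x hx
        have : r = 0 := hc r ((memK r).2 ⟨x, hr⟩)
        rw [hr, this]
        exact map_zero ι
      have hKdense : ∀ r : R, (∀ s ∈ K, r * s = 0) → r = 0 := by
        intro r hr
        by_contra hr0
        obtain ⟨a, ha, b, hb, hab⟩ :=
          hGP (lAnn K) K (lAnn_gstable hKg) hKg
            (ne_bot_iff.2 ⟨r, mem_lAnn.2 hr, hr0⟩) hKne
        exact hab (mem_lAnn.1 ha b hb)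
      have hTinj : ∀ x x' : R, q * ι x = q * ι x' → x = x' := by
        intro x x' h
        have ht : q * ι (x - x') = 0 := by rw [map_sub, mul_sub, h, sub_self]
        have : x - x' = 0 := by
          apply hKdense
          intro s hs
          obtain ⟨w, hw⟩ := (memK s).1 hs
          apply hQ.inj
          calc ι ((x - x') * s) = ι (x - x') * ι s := map_mul ι _ _
            _ = ι (x - x') * (q * ι w) := by rw [hw]
            _ = ι (x - x') * q * ι w := by rw [mul_assoc]
            _ = q * ι (x - x') * ι w := by rw [hqcomm]
            _ = 0 * ι w := by rw [ht]
            _ = ι 0 := by rw [zero_mul, map_zero]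
        exact sub_eq_zero.1 this
      set f : R → R := fun s => if h : ∃ x : R, q * ι x = ι s then h.choose else 0
        with hfdef
      have hf : ∀ s ∈ K, q * ι (f s) = ι s := by
        intro s hs
        obtain h := (memK s).1 hs
        simp only [hfdef, dif_pos h]
        exact h.choose_spec
      obtain ⟨q', hq'⟩ := hQ.lift K f hKdense
        (fun x hx y hy => hTinj _ _ (by
          rw [hf _ (K.add_mem hx hy), map_add, map_add, mul_add, hf x hx, hf y hy]))
        (fun x hx r => hTinj _ _ (by
          rw [hf _ (K.mul_mem_right x r hx), map_mul, map_mul, ← mul_assoc,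
            hf x hx]))
      have hq'comm : ∀ r : R, q' * ι r = ι r * q' := by
        intro r
        apply eq_of_dense ι hQ K hKdense
        intro s hs
        have hrs : r * s ∈ K := K.mul_mem_left r s hs
        have hfrs : f (r * s) = r * f s := by
          apply hTinj
          rw [hf _ hrs, map_mul, map_mul, ← mul_assoc, hqcomm (ι r), mul_assoc,
            hf s hs]
        calc q' * ι r * ι s = q' * ι (r * s) := by rw [mul_assoc, map_mul]
          _ = ι (f (r * s)) := hq' _ hrs
          _ = ι r * ι (f s) := by rw [hfrs, map_mul]
          _ = ι r * (q' * ι s) := by rw [hq' s hs]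
          _ = ι r * q' * ι s := by rw [mul_assoc]
      refine ⟨q', mem_center_of_comm ι hQ hq'comm, ?_, ?_⟩
      · intro g
        apply eq_of_dense ι hQ K hKdense
        intro s hs
        have ht : g⁻¹ • s ∈ K := hKg g⁻¹ s hs
        have hft : g • f (g⁻¹ • s) = f s := by
          apply hTinj
          have h1 : g • (q * ι (f (g⁻¹ • s))) = q * ι (g • f (g⁻¹ • s)) := by
            rw [smul_mul', hqg, hequiv]
          rw [← h1, hf _ ht, hequiv, smul_inv_smul, hf s hs]
        calc (g • q') * ι s = g • (q' * ι (g⁻¹ • s)) := by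
              rw [smul_mul', hequiv, smul_inv_smul]
          _ = g • ι (f (g⁻¹ • s)) := by rw [hq' _ ht]
          _ = ι (f s) := by rw [hequiv, hft]
          _ = q' * ι s := (hq' s hs).symm
      · apply eq_of_dense ι hQ K hKdense
        intro s hs
        rw [mul_assoc, hq' s hs, hf s hs, one_mul]
  · rintro ⟨h01, hinv⟩
    have hntR : (0 : R) ≠ 1 := fun h => h01 (by rw [← map_zero ι, h, map_one])
    refine ⟨⟨0, 1, hntR⟩, ?_⟩
    classical
    intro A B hAg hBg hAne hBne
    by_contra hc
    push_neg at hc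
    have hBA : ∀ b ∈ B, ∀ a ∈ A, b * a = 0 := fun b hb a ha =>
      eq_zero_of_mem_inter hsemiprime A B hc
        (A.mul_mem_left b a ha) (B.mul_mem_right b a hb)
    set L : TwoSidedIdeal R := lAnn A with hL
    have hBL : ∀ b ∈ B, b ∈ L := fun b hb => mem_lAnn.2 (hBA b hb)
    have hmulLA : ∀ u ∈ L, ∀ v ∈ A, u * v = 0 := fun u hu v hv => mem_lAnn.1 hu v hv
    have hAL : ∀ x : R, x ∈ A → x ∈ L → x = 0 := fun x h1 h2 =>
      eq_zero_of_mem_inter hsemiprime L A hmulLA h2 h1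
    set D : TwoSidedIdeal R := TwoSidedIdeal.mk'
      {x | ∃ a ∈ A, ∃ l ∈ L, x = a + l}
      ⟨0, A.zero_mem, 0, L.zero_mem, (add_zero 0).symm⟩
      (fun {x y} hx hy => by
        obtain ⟨a, ha, l, hl, rfl⟩ := hx; obtain ⟨a', ha', l', hl', rfl⟩ := hy
        exact ⟨a + a', A.add_mem ha ha', l + l', L.add_mem hl hl', by abel⟩)
      (fun {x} hx => by
        obtain ⟨a, ha, l, hl, rfl⟩ := hx
        exact ⟨-a, A.neg_mem ha, -l, L.neg_mem hl, by abel⟩)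
      (fun {r x} hx => by
        obtain ⟨a, ha, l, hl, rfl⟩ := hx
        exact ⟨r * a, A.mul_mem_left r a ha, r * l, L.mul_mem_left r l hl, mul_add r a l⟩)
      (fun {x r} hx => by
        obtain ⟨a, ha, l, hl, rfl⟩ := hx
        exact ⟨a * r, A.mul_mem_right a r ha, l * r, L.mul_mem_right l r hl, add_mul a l r⟩)
      with hD
    have memD : ∀ x : R, x ∈ D ↔ ∃ a ∈ A, ∃ l ∈ L, x = a + l := fun x =>
      TwoSidedIdeal.mem_mk' _ _ _ _ _ _ x
    have hDdense : ∀ r : R, (∀ x ∈ D, r * x = 0) → r = 0 := by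
      intro r hr
      have hrA : r ∈ L := mem_lAnn.2 fun a ha =>
        hr a ((memD a).2 ⟨a, ha, 0, L.zero_mem, (add_zero a).symm⟩)
      have hrL : r ∈ lAnn L := mem_lAnn.2 fun l hl =>
        hr l ((memD l).2 ⟨0, A.zero_mem, l, hl, (zero_add l).symm⟩)
      exact eq_zero_of_mem_inter hsemiprime (lAnn L) L
        (fun u hu v hv => mem_lAnn.1 hu v hv) hrL hrA
    set f : R → R := fun x =>
      if h : ∃ a ∈ A, ∃ l ∈ L, x = a + l then h.choose else 0 with hfdef
    have hfA : ∀ x ∈ D, f x ∈ A ∧ x - f x ∈ L := by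
      intro x hx
      obtain h := (memD x).1 hx
      simp only [hfdef, dif_pos h]
      obtain ⟨ha, l, hl, hxl⟩ := h.choose_spec
      exact ⟨ha, by rw [sub_eq_iff_eq_add'.2 hxl]; exact hl⟩
    have huniq : ∀ x ∈ D, ∀ a ∈ A, x - a ∈ L → f x = a := by
      intro x hx a ha hxa
      have h1 : f x - a ∈ A := A.sub_mem (hfA x hx).1 ha
      have h2 : f x - a ∈ L := by
        have : f x - a = (x - a) - (x - f x) := by abel
        rw [this]
        exact L.sub_mem hxa (hfA x hx).2
      exact sub_eq_zero.1 (hAL _ h1 h2)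
    obtain ⟨e, he⟩ := hQ.lift D f hDdense
      (fun x hx y hy => by
        apply huniq (x + y) (D.add_mem hx hy) _ (A.add_mem (hfA x hx).1 (hfA y hy).1)
        have : x + y - (f x + f y) = (x - f x) + (y - f y) := by abel
        rw [this]
        exact L.add_mem (hfA x hx).2 (hfA y hy).2)
      (fun x hx r => by
        apply huniq (x * r) (D.mul_mem_right x r hx) _
          (A.mul_mem_right (f x) r (hfA x hx).1)
        have : x * r - f x * r = (x - f x) * r := (sub_mul x (f x) r).symm
        rw [this]
        exact L.mul_mem_right _ r (hfA x hx).2)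
    have heA : ∀ a ∈ A, e * ι a = ι a := by
      intro a ha
      have haD : a ∈ D := (memD a).2 ⟨a, ha, 0, L.zero_mem, (add_zero a).symm⟩
      rw [he a haD, huniq a haD a ha (by simpa using L.zero_mem)]
    have heL : ∀ l ∈ L, e * ι l = 0 := by
      intro l hl
      have hlD : l ∈ D := (memD l).2 ⟨0, A.zero_mem, l, hl, (zero_add l).symm⟩
      rw [he l hlD, huniq l hlD 0 A.zero_mem (by simpa using hl), map_zero]
    have hcomm : ∀ r : R, e * ι r = ι r * e := by
      intro r
      apply eq_of_dense ι hQ D hDdense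
      intro x hx
      have hrx : r * x ∈ D := D.mul_mem_left r x hx
      have hfrx : f (r * x) = r * f x := by
        apply huniq (r * x) hrx _ (A.mul_mem_left r _ (hfA x hx).1)
        have : r * x - r * f x = r * (x - f x) := (mul_sub r x (f x)).symm
        rw [this]
        exact L.mul_mem_left r _ (hfA x hx).2
      calc e * ι r * ι x = e * ι (r * x) := by rw [mul_assoc, map_mul]
        _ = ι (f (r * x)) := he _ hrx
        _ = ι r * ι (f x) := by rw [hfrx, map_mul]
        _ = ι r * (e * ι x) := by rw [he x hx]
        _ = ι r * e * ι x := by rw [mul_assoc]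
    have ecentral : e ∈ Subring.center Q := mem_center_of_comm ι hQ hcomm
    have hDg : IsGStable G D := by
      intro g x hx
      obtain ⟨a, ha, l, hl, rfl⟩ := (memD x).1 hx
      exact (memD _).2 ⟨g • a, hAg g a ha, g • l, lAnn_gstable hAg g l hl, smul_add g a l⟩
    have eginv : ∀ g : G, g • e = e := by
      intro g
      apply eq_of_dense ι hQ D hDdense
      intro x hx
      have ht : g⁻¹ • x ∈ D := hDg g⁻¹ x hx
      have hft : g • f (g⁻¹ • x) = f x := by
        apply (huniq x hx _ (hAg g _ (hfA _ ht).1) _).symm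
        have : x - g • f (g⁻¹ • x) = g • ((g⁻¹ • x) - f (g⁻¹ • x)) := by
          rw [smul_sub, smul_inv_smul]
        rw [this]
        exact lAnn_gstable hAg g _ (hfA _ ht).2
      calc (g • e) * ι x = g • (e * ι (g⁻¹ • x)) := by
            rw [smul_mul', hequiv, smul_inv_smul]
        _ = g • ι (f (g⁻¹ • x)) := by rw [he _ ht]
        _ = ι (f x) := by rw [hequiv, hft]
        _ = e * ι x := (he x hx).symm
    obtain ⟨a, ha, ha0⟩ := ne_bot_iff.1 hAne
    have hne0 : e ≠ 0 := by
      intro he0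
      apply ha0
      apply hQ.inj
      rw [map_zero, ← heA a ha, he0, zero_mul]
    obtain ⟨e', he'c, _, hee'⟩ := hinv e ecentral eginv hne0
    obtain ⟨b, hb, hb0⟩ := ne_bot_iff.1 hBne
    apply hb0
    apply hQ.inj
    rw [map_zero]
    calc ι b = (e * e') * ι b := by rw [hee', one_mul]
      _ = (e' * e) * ι b := by rw [Subring.mem_center_iff.1 ecentral e']
      _ = e' * (e * ι b) := by rw [mul_assoc]
      _ = 0 := by rw [heL b (hBL b hb), mul_zero]
end

section
/- Let G be an affine algebraic group over an algebraically closed field k acting rationally by k-algebra automorphisms on a k-algebra R, and extend the G-action to the right Amitsur-Martindale quotient ring Q_r(R). Then for every subset T ⊆ Q_r(R), the centralizer C_G(T) = { g ∈ G : g·q = q for all q ∈ T } is a Zariski-closed subgroup of G. -/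
open TensorProduct

section Aux

variable {k : Type*} [Field k] {A : Type*} [CommRing A] [Algebra k A]
variable {R : Type*} [Ring R] [Algebra k R]

/-- Evaluation of a functional on the right tensor factor. -/
noncomputable def evQ (σ : A →ₗ[k] k) : R ⊗[k] A →ₗ[k] R :=
  (TensorProduct.rid k R).toLinearMap ∘ₗ TensorProduct.map LinearMap.id σ

lemma evQ_tmul (σ : A →ₗ[k] k) (r : R) (a : A) : evQ σ (r ⊗ₜ[k] a) = σ a • r := by
  simp [evQ]

lemma evQ_rTensor (σ : A →ₗ[k] k) (L : R →ₗ[k] R) (w : R ⊗[k] A) :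
    evQ σ (L.rTensor A w) = L (evQ σ w) := by
  induction w using TensorProduct.induction_on with
  | zero => simp
  | tmul r a => simp [evQ_tmul]
  | add x y hx hy => simp [hx, hy]

open Classical in
/-- Coordinates of an element of `R ⊗ A` with respect to a basis of `R`. -/
noncomputable def coordQ (w : R ⊗[k] A) : Module.Basis.ofVectorSpaceIndex k R →₀ A :=
  TensorProduct.finsuppScalarLeft k A (Module.Basis.ofVectorSpaceIndex k R)
    (((Module.Basis.ofVectorSpace k R).repr.toLinearMap.rTensor A) w)

lemma coordQ_key (σ : A →ₗ[k] k) (w : R ⊗[k] A) (i : Module.Basis.ofVectorSpaceIndex k R) :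
    (Module.Basis.ofVectorSpace k R).repr (evQ σ w) i = σ (coordQ w i) := by
  classical
  have h : (Finsupp.lapply (M := k) (R := k) i) ∘ₗ
        ((Module.Basis.ofVectorSpace k R).repr : R →ₗ[k] (Module.Basis.ofVectorSpaceIndex k R →₀ k)) ∘ₗ evQ σ
      = σ ∘ₗ (Finsupp.lapply (M := A) (R := k) i) ∘ₗ
        (TensorProduct.finsuppScalarLeft k A (Module.Basis.ofVectorSpaceIndex k R) :
          (Module.Basis.ofVectorSpaceIndex k R →₀ k) ⊗[k] A →ₗ[k] (Module.Basis.ofVectorSpaceIndex k R →₀ A)) ∘ₗ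
        ((Module.Basis.ofVectorSpace k R).repr.toLinearMap.rTensor A) := by
    apply TensorProduct.ext'
    intro r a
    simp [evQ_tmul, mul_comm]
  exact LinearMap.congr_fun h w

lemma evQ_eq_zero_iff (σ : A →ₗ[k] k) (w : R ⊗[k] A) :
    evQ σ w = 0 ↔ ∀ i, σ (coordQ w i) = 0 := by
  constructor
  · intro h i
    rw [← coordQ_key σ w i, h]
    simp
  · intro h
    have h0 : (Module.Basis.ofVectorSpace k R).repr (evQ σ w) = 0 := by
      ext i
      rw [coordQ_key σ w i]
      simpa using h i
    exact (Module.Basis.ofVectorSpace k R).repr.map_eq_zero_iff.mp h0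

variable {Q : Type*} [Ring Q]

open Classical in
/-- The partial function `f` determined by `q` on its domain ideal:
`q * ι x = ι (mq ι q x)` whenever the latter exists. -/
noncomputable def mq (ι : R →+* Q) (q : Q) (x : R) : R :=
  if h : ∃ r : R, q * ι x = ι r then h.choose else 0

lemma mq_spec (ι : R →+* Q) {q : Q} {x : R} (h : ∃ r : R, q * ι x = ι r) :
    q * ι x = ι (mq ι q x) := by
  classical
  rw [mq, dif_pos h]
  exact h.choose_spec

/-- The element of `R ⊗ A` whose vanishing under `ev_g` expresses the
equation `(g • f x) * y = f ((g • x) * y)`. -/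
noncomputable def wAux (ρ : R →ₐ[k] R ⊗[k] A) (ι : R →+* Q) (q : Q) (x y : R)
    (ψ : R →ₗ[k] R) : R ⊗[k] A :=
  (LinearMap.mulRight k y).rTensor A (ρ (mq ι q x)) - ψ.rTensor A (ρ x)

end Aux

/-- Let `G` be an affine algebraic group over an algebraically closed field `k`,
presented by its coordinate Hopf algebra `A = k[G]` (finitely generated) with
`k`-points identified via `pt`, acting rationally on a `k`-algebra `R` via a
comodule-algebra structure `ρ` with `g • r = (id ⊗ ev_g)(ρ r)`. Extend the action of
`G` to a right Amitsur–Martindale quotient ring `Q` of `R`. Then for every subset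
`T ⊆ Q`, the centralizer `C_G(T) = {g : g•q = q for all q ∈ T}` is a Zariski-closed
subgroup of `G`, i.e. a subgroup which is the vanishing locus of a set of regular
functions on `G`. -/

theorem centralizer_in_quotient_ring_is_closed_subgroup
    {k : Type*} [Field k] [IsAlgClosed k]
    {A : Type*} [CommRing A] [HopfAlgebra k A] [Algebra.FiniteType k A]
    {G : Type*} [Group G] (pt : G ≃ (A →ₐ[k] k))
    (hpt : ∀ (g h : G) (a : A), pt (g * h) a =
      LinearMap.mul' k k
        (TensorProduct.map (pt g).toLinearMap (pt h).toLinearMap (Coalgebra.comul a)))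
    {R : Type*} [Ring R] [Algebra k R] [MulSemiringAction G R]
    (ρ : R →ₐ[k] R ⊗[k] A)
    (hcounit : ∀ r : R, (TensorProduct.rid k R)
      (TensorProduct.map LinearMap.id (Bialgebra.counitAlgHom k A).toLinearMap (ρ r))
        = r)
    (haction : ∀ (g : G) (r : R), g • r =
      (TensorProduct.rid k R)
        (TensorProduct.map LinearMap.id (pt g).toLinearMap (ρ r)))
    {Q : Type*} [Ring Q] (ι : R →+* Q) (hQ : IsMartindaleQuot ι)
    [MulSemiringAction G Q] (hι : ∀ (g : G) (r : R), g • ι r = ι (g • r)) :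
    ∀ T : Set Q, ∃ (H : Subgroup G) (E : Set A),
      (H : Set G) = {g : G | ∀ q ∈ T, g • q = q} ∧
      (H : Set G) = {g : G | ∀ a ∈ E, pt g a = 0} := by
  intro T
  classical
  -- the action of `g` on `R` via evaluation
  have hsmul_ev : ∀ (g : G) (r : R), g • r = evQ (pt g).toLinearMap (ρ r) := by
    intro g r
    rw [haction]
    rfl
  -- the chosen domain ideals
  set I : Q → TwoSidedIdeal R := fun q => (hQ.dom q).choose with hIdef
  have hIann : ∀ q, ∀ r : R, (∀ x ∈ I q, r * x = 0) → r = 0 :=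
    fun q => (hQ.dom q).choose_spec.1
  have hIdom : ∀ q, ∀ x ∈ I q, ∃ r : R, q * ι x = ι r :=
    fun q => (hQ.dom q).choose_spec.2
  have hmq : ∀ q, ∀ x ∈ I q, q * ι x = ι (mq ι q x) :=
    fun q x hx => mq_spec ι (hIdom q x hx)
  -- right `R`-linearity and additivity of `mq` on the domain ideal
  have hmq_radd : ∀ q, ∀ x ∈ I q, ∀ y ∈ I q, mq ι q (x + y) = mq ι q x + mq ι q y := by
    intro q x hx y hy
    apply hQ.inj
    rw [← hmq q _ ((I q).add_mem hx hy), map_add, map_add, mul_add, hmq q x hx, hmq q y hy]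
  have hmq_rmul : ∀ q, ∀ x ∈ I q, ∀ r : R, mq ι q (x * r) = mq ι q x * r := by
    intro q x hx r
    apply hQ.inj
    rw [← hmq q _ ((I q).mul_mem_right x r hx), map_mul, ← mul_assoc, hmq q x hx, ← map_mul]
  have hmq_smul : ∀ q, ∀ x ∈ I q, ∀ c : k, mq ι q (c • x) = c • mq ι q x := by
    intro q x hx c
    have h1 : c • x = x * algebraMap k R c := by
      rw [Algebra.smul_def, Algebra.commutes]
    rw [h1, hmq_rmul q x hx, ← Algebra.commutes, ← Algebra.smul_def]
  -- the linear map `r ↦ mq ι q (r * y)` for `y` in the domain ideal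
  have hpsi : ∀ q, ∀ y ∈ I q, ∃ ψ : R →ₗ[k] R, ∀ r, ψ r = mq ι q (r * y) := by
    intro q y hy
    refine ⟨{ toFun := fun r => mq ι q (r * y)
              map_add' := ?_
              map_smul' := ?_ }, fun r => rfl⟩
    · intro r s
      show mq ι q ((r + s) * y) = mq ι q (r * y) + mq ι q (s * y)
      rw [add_mul]
      exact hmq_radd q _ ((I q).mul_mem_left r y hy) _ ((I q).mul_mem_left s y hy)
    · intro c r
      show mq ι q ((c • r) * y) = c • mq ι q (r * y)
      rw [smul_mul_assoc]
      exact hmq_smul q _ ((I q).mul_mem_left r y hy) c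
  -- translation between the group equation and vanishing of `evQ`
  have hw : ∀ (g : G) (q : Q) (x y : R) (ψ : R →ₗ[k] R), (∀ r, ψ r = mq ι q (r * y)) →
      (evQ (pt g).toLinearMap (wAux ρ ι q x y ψ) = 0 ↔
        (g • mq ι q x) * y = mq ι q ((g • x) * y)) := by
    intro g q x y ψ hψ
    have h1 : evQ (pt g).toLinearMap (wAux ρ ι q x y ψ)
        = (g • mq ι q x) * y - mq ι q ((g • x) * y) := by
      rw [wAux, map_sub, evQ_rTensor, evQ_rTensor, ← hsmul_ev, ← hsmul_ev,
        LinearMap.mulRight_apply, hψ]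
    rw [h1, sub_eq_zero]
  -- the set of regular functions
  refine ⟨{ carrier := {g : G | ∀ q ∈ T, g • q = q}
            one_mem' := by
              intro q hq
              exact one_smul G q
            mul_mem' := by
              intro g h hg hh q hq
              rw [mul_smul, hh q hq, hg q hq]
            inv_mem' := by
              intro g hg q hq
              rw [inv_smul_eq_iff, hg q hq] },
    {a : A | ∃ q ∈ T, ∃ x ∈ I q, ∃ y ∈ I q, ∃ ψ : R →ₗ[k] R,
      (∀ r, ψ r = mq ι q (r * y)) ∧ ∃ i, a = coordQ (wAux ρ ι q x y ψ) i}, rfl, ?_⟩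
  ext g
  simp only [Subgroup.coe_set_mk, Set.mem_setOf_eq]
  constructor
  · -- centralizing `T` implies vanishing of all regular functions
    rintro hg a ⟨q, hqT, x, hx, y, hy, ψ, hψ, i, rfl⟩
    have heq : (g • mq ι q x) * y = mq ι q ((g • x) * y) := by
      have h1 : q * ι (g • x) = ι (g • mq ι q x) := by
        calc q * ι (g • x) = (g • q) * (g • ι x) := by rw [hg q hqT, hι]
          _ = g • (q * ι x) := (smul_mul' g q (ι x)).symm
          _ = g • ι (mq ι q x) := by rw [hmq q x hx]
          _ = ι (g • mq ι q x) := hι g _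
      have h2 : q * ι ((g • x) * y) = ι ((g • mq ι q x) * y) := by
        rw [map_mul, ← mul_assoc, h1, ← map_mul]
      have h3 : (g • x) * y ∈ I q := (I q).mul_mem_left _ y hy
      exact (hQ.inj ((hmq q _ h3).symm.trans h2)).symm
    have := (evQ_eq_zero_iff (pt g).toLinearMap _).mp ((hw g q x y ψ hψ).mpr heq) i
    simpa using this
  · -- vanishing of all regular functions implies centralizing `T`
    intro hg q hqT
    -- the equations `(g • f x) * y = f ((g • x) * y)`
    have heq : ∀ x ∈ I q, ∀ y ∈ I q, (g • mq ι q x) * y = mq ι q ((g • x) * y) := by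
      intro x hx y hy
      obtain ⟨ψ, hψ⟩ := hpsi q y hy
      refine (hw g q x y ψ hψ).mp ?_
      rw [evQ_eq_zero_iff]
      intro i
      have hmem : coordQ (wAux ρ ι q x y ψ) i ∈ {a : A | ∃ q ∈ T, ∃ x ∈ I q, ∃ y ∈ I q,
          ∃ ψ : R →ₗ[k] R, (∀ r, ψ r = mq ι q (r * y)) ∧
            ∃ i, a = coordQ (wAux ρ ι q x y ψ) i} :=
        ⟨q, hqT, x, hx, y, hy, ψ, hψ, i, rfl⟩
      simpa using hg _ hmem
    -- first consequence: `q * ι (g • x) = ι (g • mq ι q x)` for `x ∈ I q`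
    have hstep : ∀ x ∈ I q, q * ι (g • x) = ι (g • mq ι q x) := by
      intro x hx
      have h0 : ∀ y ∈ I q, (q * ι (g • x) - ι (g • mq ι q x)) * ι y = 0 := by
        intro y hy
        have h3 : (g • x) * y ∈ I q := (I q).mul_mem_left _ y hy
        rw [sub_mul, mul_assoc, ← map_mul, ← map_mul, hmq q _ h3, ← heq x hx y hy]
        exact sub_self _
      exact sub_eq_zero.mp (hQ.ann _ (I q) (hIann q) h0)
    -- the translated ideal `g • I q` and its annihilator property
    set J : TwoSidedIdeal R :=
      (I q).comap (MulSemiringAction.toRingEquiv G R g⁻¹) with hJdef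
    have hmemJ : ∀ z : R, z ∈ J ↔ g⁻¹ • z ∈ I q := by
      intro z
      rw [hJdef, TwoSidedIdeal.mem_comap, MulSemiringAction.toRingEquiv_apply]
    have hJann : ∀ r : R, (∀ z ∈ J, r * z = 0) → r = 0 := by
      intro r hr
      have h1 : ∀ x ∈ I q, (g⁻¹ • r) * x = 0 := by
        intro x hx
        have hz : g • x ∈ J := by
          rw [hmemJ, inv_smul_smul]
          exact hx
        have h2 : g⁻¹ • (r * (g • x)) = 0 := by rw [hr _ hz, smul_zero]
        rwa [smul_mul', inv_smul_smul] at h2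
      have h3 : g⁻¹ • r = 0 := hIann q _ h1
      have h4 : g • (g⁻¹ • r) = g • (0 : R) := congrArg _ h3
      rwa [smul_inv_smul, smul_zero] at h4
    have hz : ∀ z ∈ J, (g • q - q) * ι z = 0 := by
      intro z hzJ
      have hx : g⁻¹ • z ∈ I q := (hmemJ z).mp hzJ
      have hzz : z = g • (g⁻¹ • z) := (smul_inv_smul g z).symm
      rw [sub_mul, hzz, hstep _ hx, ← hι, ← smul_mul', hmq q _ hx, hι]
      exact sub_self _
    exact sub_eq_zero.mp (hQ.ann _ J hJann hz)
end
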